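/- arXiv:math/0309229 — 7 statements merged into one kernel-verified Lean document; each statement's English description precedes it below -/
import Mathlib

section
/- Let β : ℤ^n → N be a homomorphism of finitely generated abelian groups with finite cokernel. Then the kernel of the dual map β^∨ : (ℤ^n)^⋆ → DG(β) equals the image of β^⋆ : N^⋆ → (ℤ^n)^⋆, and β^⋆ is injective; in other words 0 → N^⋆ → (ℤ^n)^⋆ → DG(β) is exact. -/
/-- **Gale duality: the sequence `0 → N⋆ → (ℤⁿ)⋆ → DG(β)` is exact.**
Let `β : ℤⁿ → N` have finite cokernel, `0 → ℤʳ --Q--> ℤ^{d+r} --proj--> N → 0` a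
presentation of `N` and `B` a lift of `β`.  With `DG(β) = (ℤ^{n+r})⋆/im([B Q]⋆)` and
`β^∨ : (ℤⁿ)⋆ → DG(β)` the composition of the inclusion `φ ↦ φ ∘ fst` with the quotient
map, the map `β⋆ : N⋆ → (ℤⁿ)⋆`, `θ ↦ θ ∘ β`, is injective, and the kernel of `β^∨`
(i.e. those `φ` whose image `φ ∘ fst` lies in the image of `[B Q]⋆`) is exactly the
image of `β⋆`. -/
theorem stmt_1 (n d r : ℕ) (N : Type) [AddCommGroup N]
    (Q : (Fin r → ℤ) →+ (Fin (d + r) → ℤ))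
    (proj : (Fin (d + r) → ℤ) →+ N)
    (hQinj : Function.Injective ⇑Q)
    (hprojsurj : Function.Surjective ⇑proj)
    (hexact : Function.Exact ⇑Q ⇑proj)
    (B : (Fin n → ℤ) →+ (Fin (d + r) → ℤ))
    (β : (Fin n → ℤ) →+ N)
    (hB : proj.comp B = β)
    (hcoker : Finite (N ⧸ β.range)) :
    Function.Injective (fun θ : N →+ ℤ => θ.comp β) ∧
    ∀ φ : (Fin n → ℤ) →+ ℤ,
      ((∃ ψ : (Fin (d + r) → ℤ) →+ ℤ,
          φ.comp (AddMonoidHom.fst (Fin n → ℤ) (Fin r → ℤ)) = ψ.comp (B.coprod Q)) ↔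
        (∃ θ : N →+ ℤ, φ = θ.comp β)) := by
  constructor
  · intro θ₁ θ₂ h
    simp only at h
    ext y
    have hfin : IsOfFinAddOrder (QuotientAddGroup.mk y : N ⧸ β.range) :=
      isOfFinAddOrder_of_finite _
    set k := addOrderOf (QuotientAddGroup.mk y : N ⧸ β.range) with hkdef
    have hkpos : 0 < k := hfin.addOrderOf_pos
    have hmem : (k • y : N) ∈ β.range := by
      rw [← QuotientAddGroup.eq_zero_iff]
      have := addOrderOf_nsmul_eq_zero (QuotientAddGroup.mk y : N ⧸ β.range)
      simpa [← hkdef] using this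
    obtain ⟨x, hx⟩ := hmem
    have h1 : k • θ₁ y = k • θ₂ y := by
      rw [← map_nsmul, ← map_nsmul, ← hx]
      exact DFunLike.congr_fun h x
    have : (k : ℤ) * θ₁ y = (k : ℤ) * θ₂ y := by
      simpa [nsmul_eq_mul] using h1
    exact mul_left_cancel₀ (by exact_mod_cast hkpos.ne') this
  · intro φ
    constructor
    · rintro ⟨ψ, hψ⟩
      have hψQ : ∀ y, ψ (Q y) = 0 := by
        intro y
        have := DFunLike.congr_fun hψ ((0, y) : (Fin n → ℤ) × (Fin r → ℤ))
        simpa using this.symm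
      have hψB : ∀ x, ψ (B x) = φ x := by
        intro x
        have := DFunLike.congr_fun hψ ((x, 0) : (Fin n → ℤ) × (Fin r → ℤ))
        simpa using this.symm
      have hker : ∀ z ∈ proj.ker, ψ z = 0 := by
        intro z hz
        have hz' : proj z = 0 := hz
        obtain ⟨y, hy⟩ := (hexact z).mp hz'
        rw [← hy]; exact hψQ y
      let e := QuotientAddGroup.quotientKerEquivOfSurjective proj hprojsurj
      refine ⟨(QuotientAddGroup.lift proj.ker ψ hker).comp e.symm.toAddMonoidHom, ?_⟩
      refine AddMonoidHom.ext fun x => ?_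
      have h1 : e.symm (β x) = QuotientAddGroup.mk (B x) := by
        rw [AddEquiv.symm_apply_eq]
        have : β x = proj (B x) := (DFunLike.congr_fun hB x).symm
        rw [this]
        rfl
      simp only [AddMonoidHom.comp_apply, AddEquiv.coe_toAddMonoidHom, h1]
      exact (hψB x).symm
    · rintro ⟨θ, hθ⟩
      refine ⟨θ.comp proj, ?_⟩
      refine AddMonoidHom.ext fun ⟨x, y⟩ => ?_
      have hQ0 : proj (Q y) = 0 := hexact.apply_apply_eq_zero y
      have hBx : proj (B x) = β x := DFunLike.congr_fun hB x
      simp [hθ, AddMonoidHom.coprod_apply, map_add, hQ0, hBx]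
end

section
/- Let β : ℤ^n → N be a homomorphism of finitely generated abelian groups. If β is naturally isomorphic to its double dual β^∨∨, then the cokernel of β is finite; conversely if Coker(β) is finite then β^∨∨ is naturally isomorphic to β. -/
/-!
Gale duals do not depend on the presentation: two projective presentations of the same map are
related by chain maps that are the identity on the source, unique up to homotopy, so their duals
are isomorphic compatibly with the dual maps. If `Coker β` is finite then `[B Q]⋆` is injective,
so `DG(β)` has the canonical presentation `0 → (ℤᵐ)⋆ → (ℤⁿ × ℤʳ)⋆ → DG(β) → 0`; by double
duality `ℤᵏ ≅ (ℤᵏ)⋆⋆`, the Gale dual of that presentation is `N` again, with `β^∨∨` becoming `β`.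
Conversely, the cokernel of a dual map `ℤⁿ⋆ → DG` is always torsion (a functional on `ℤ^{r'}`
extends along the injection `Q'` after multiplication by a nonzero integer), so `β ≅ β^∨∨` makes
`Coker β` a finitely generated torsion group.
-/

/-- Precomposition with `f`, as a homomorphism of dual groups. -/
def compRight {A B C : Type} [AddZeroClass A] [AddZeroClass B] [AddCommMonoid C]
    (f : A →+ B) : (B →+ C) →+ (A →+ C) where
  toFun φ := φ.comp f
  map_zero' := by ext a; rfl
  map_add' φ ψ := by ext a; rfl

/-- The Gale dual group `DG(β) = (ℤ^{n+r})⋆ / im([B Q]⋆)`. -/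
abbrev DGrp {n r m : ℕ} (B : (Fin n → ℤ) →+ (Fin m → ℤ))
    (Q : (Fin r → ℤ) →+ (Fin m → ℤ)) : Type :=
  (((Fin n → ℤ) × (Fin r → ℤ)) →+ ℤ) ⧸ (compRight (C := ℤ) (B.coprod Q)).range

/-- The dual map `β^∨ : (ℤⁿ)⋆ → DG(β)`. -/
noncomputable def dgDual {n r m : ℕ} (B : (Fin n → ℤ) →+ (Fin m → ℤ))
    (Q : (Fin r → ℤ) →+ (Fin m → ℤ)) : ((Fin n → ℤ) →+ ℤ) →+ DGrp B Q :=
  (QuotientAddGroup.mk' _).comp (compRight (AddMonoidHom.fst (Fin n → ℤ) (Fin r → ℤ)))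

/-- The canonical identification `ℤⁿ ≅ (ℤⁿ)⋆`, `x ↦ (y ↦ ∑ i, x i * y i)`. -/
def pairing (n : ℕ) : (Fin n → ℤ) →+ ((Fin n → ℤ) →+ ℤ) where
  toFun x :=
    { toFun := fun y => ∑ i, x i * y i
      map_zero' := by simp
      map_add' := by intro y z; simp [mul_add, Finset.sum_add_distrib] }
  map_zero' := by ext y; simp
  map_add' x x' := by ext y; simp [add_mul, Finset.sum_add_distrib]


open Function

theorem compRight_apply {A B C : Type} [AddZeroClass A] [AddZeroClass B] [AddCommMonoid C]
    (f : A →+ B) (φ : B →+ C) : compRight f φ = φ.comp f := rfl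

theorem pairing_comm {n : ℕ} (x y : Fin n → ℤ) : pairing n x y = pairing n y x :=
  dotProduct_comm x y

def pairingEquiv (n : ℕ) : (Fin n → ℤ) ≃+ ((Fin n → ℤ) →+ ℤ) :=
  (dotProductEquiv ℤ (Fin n)).toAddEquiv.trans (addMonoidHomLequivInt ℤ).symm.toAddEquiv

theorem coe_pairingEquiv (n : ℕ) : ⇑(pairingEquiv n) = pairing n := rfl

noncomputable def dualDualEquiv (X : Type) [AddCommGroup X] [Module.IsReflexive ℤ X] :
    X ≃+ ((X →+ ℤ) →+ ℤ) :=
  ((Module.evalEquiv ℤ X).trans ((addMonoidHomLequivInt (B := ℤ) ℤ).dualMap.trans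
    (addMonoidHomLequivInt ℤ).symm)).toAddEquiv

theorem coe_dualDualEquiv (X : Type) [AddCommGroup X] [Module.IsReflexive ℤ X] :
    ⇑(dualDualEquiv X) = AddMonoidHom.eval := rfl

instance {X : Type} [AddCommGroup X] [Module.Projective ℤ X] [Module.Finite ℤ X] :
    Module.Projective ℤ (X →+ ℤ) :=
  Module.Projective.of_equiv (addMonoidHomLequivInt ℤ).symm

theorem exists_comp_eq_of_projective {P M N : Type} [AddCommGroup P] [AddCommGroup M]
    [AddCommGroup N] [Module.Projective ℤ P] (p : M →+ N) (hp : Surjective p) (g : P →+ N) :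
    ∃ f : P →+ M, p.comp f = g := by
  obtain ⟨f, hf⟩ := Module.projective_lifting_property p.toIntLinearMap g.toIntLinearMap hp
  exact ⟨f.toAddMonoidHom, congr(LinearMap.toAddMonoidHom $hf)⟩

theorem exists_comp_eq_of_range_le {R M X : Type} [AddCommGroup R] [AddCommGroup M]
    [AddCommGroup X] {Q : R →+ M} (hQ : Injective Q) (u : X →+ M) (hu : u.range ≤ Q.range) :
    ∃ v : X →+ R, Q.comp v = u :=
  ⟨(AddMonoidHom.ofInjective hQ).symm.toAddMonoidHom.comp (u.codRestrict _ fun x => hu ⟨x, rfl⟩),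
    AddMonoidHom.ext fun _ => AddMonoidHom.apply_ofInjective_symm hQ _⟩

theorem Function.Exact.exists_comp_eq {R M N X : Type} [AddCommGroup R] [AddCommGroup M]
    [AddCommGroup N] [AddCommGroup X] {Q : R →+ M} {p : M →+ N} (h : Exact Q p)
    (hQ : Injective Q) (u : X →+ M) (hu : p.comp u = 0) : ∃ v : X →+ R, Q.comp v = u :=
  exists_comp_eq_of_range_le hQ u <| by
    rintro _ ⟨x, rfl⟩
    exact (h (u x)).1 (DFunLike.congr_fun hu x)

theorem exists_intCast_comp_eq_zsmul {M : Type} [AddCommGroup M] [AddGroup.FG M] (g : M →+ ℚ) :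
    ∃ k : ℤ, k ≠ 0 ∧ ∃ χ : M →+ ℤ, (Int.castAddHom ℚ).comp χ = k • g := by
  obtain ⟨S, hS, hSfin⟩ := AddGroup.fg_iff.mp ‹_›
  obtain ⟨⟨k, hk⟩, hint⟩ :=
    IsLocalization.exist_integer_multiples_of_finset (nonZeroDivisors ℤ) (hSfin.toFinset.image g)
  refine ⟨k, nonZeroDivisors.ne_zero hk, exists_comp_eq_of_range_le (Int.cast_injective) _ ?_⟩
  rintro _ ⟨x, rfl⟩
  have hx : x ∈ AddSubgroup.closure S := hS ▸ AddSubgroup.mem_top x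
  refine AddSubgroup.closure_le (K := ((Int.castAddHom ℚ).range).comap (k • g)) |>.2 ?_ hx
  intro s hs
  obtain ⟨z, hz⟩ := hint (g s) (Finset.mem_image_of_mem g (hSfin.mem_toFinset.2 hs))
  exact ⟨z, by simpa using hz⟩

-- Extend over the injective `ℤ`-module `ℚ`, then clear denominators.
theorem exists_comp_eq_zsmul_of_injective {R M : Type} [AddCommGroup R] [AddCommGroup M]
    [AddGroup.FG M] {Q : R →+ M} (hQ : Injective Q) (ψ : R →+ ℤ) :
    ∃ k : ℤ, k ≠ 0 ∧ ∃ χ : M →+ ℤ, χ.comp Q = k • ψ := by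
  obtain ⟨g, hg⟩ := (Module.Baer.of_divisible ℚ).extension_property_addMonoidHom Q hQ
    ((Int.castAddHom ℚ).comp ψ)
  obtain ⟨k, hk, χ, hχ⟩ := exists_intCast_comp_eq_zsmul g
  refine ⟨k, hk, χ, AddMonoidHom.ext fun r => Int.cast_injective (α := ℚ) ?_⟩
  have hχr : (χ (Q r) : ℚ) = k • g (Q r) := DFunLike.congr_fun hχ (Q r)
  have hgr : g (Q r) = ψ r := DFunLike.congr_fun hg r
  simp [hχr, hgr]

theorem AddMonoidHom.prod_ext {A B C : Type} [AddCommGroup A] [AddCommGroup B] [AddCommGroup C]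
    {f g : A × B →+ C} (hl : f.comp (inl A B) = g.comp (inl A B))
    (hr : f.comp (inr A B) = g.comp (inr A B)) : f = g := by
  rw [← f.coprod_unique, ← g.coprod_unique, hl, hr]

-- `DGrp` for arbitrary groups: `Q : R → M` and `B : X → M` present a map `X → M ⧸ Q(R)`.
abbrev DualGroup {X R M : Type} [AddCommGroup X] [AddCommGroup R] [AddCommGroup M]
    (B : X →+ M) (Q : R →+ M) : Type :=
  ((X × R) →+ ℤ) ⧸ (compRight (C := ℤ) (B.coprod Q)).range

namespace DualGroup

variable {X R M : Type} [AddCommGroup X] [AddCommGroup R] [AddCommGroup M]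

def ofDual (B : X →+ M) (Q : R →+ M) : (X →+ ℤ) →+ DualGroup B Q :=
  (QuotientAddGroup.mk' _).comp (compRight (AddMonoidHom.fst X R))

theorem ofDual_apply (B : X →+ M) (Q : R →+ M) (φ : X →+ ℤ) :
    ofDual B Q φ = QuotientAddGroup.mk (φ.comp (AddMonoidHom.fst X R)) := rfl

theorem exists_zsmul_eq_ofDual [AddGroup.FG M] (B : X →+ M) {Q : R →+ M} (hQ : Injective Q)
    (q : DualGroup B Q) : ∃ k : ℤ, k ≠ 0 ∧ ∃ φ, k • q = ofDual B Q φ := by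
  induction q using QuotientAddGroup.induction_on with | H ψ => ?_
  obtain ⟨k, hk, χ, hχ⟩ := exists_comp_eq_zsmul_of_injective hQ (ψ.comp (AddMonoidHom.inr X R))
  refine ⟨k, hk, (k • ψ - χ.comp (B.coprod Q)).comp (AddMonoidHom.inl X R), ?_⟩
  rw [ofDual_apply, ← QuotientAddGroup.mk_zsmul, QuotientAddGroup.eq_iff_sub_mem]
  refine ⟨χ, AddMonoidHom.prod_ext ?_ ?_⟩
  · ext x
    simp [compRight_apply]
  · ext s
    simpa [compRight_apply, Prod.mk_zero_zero] using DFunLike.congr_fun hχ s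

variable {R₁ M₁ R₂ M₂ G : Type} [AddCommGroup R₁] [AddCommGroup M₁]
  [AddCommGroup R₂] [AddCommGroup M₂] [AddCommGroup G]
  {B₁ : X →+ M₁} {Q₁ : R₁ →+ M₁} {B₂ : X →+ M₂} {Q₂ : R₂ →+ M₂}

def comap (α : X × R₁ →+ X × R₂) (f : M₁ →+ M₂)
    (hα : (B₂.coprod Q₂).comp α = f.comp (B₁.coprod Q₁)) :
    DualGroup B₂ Q₂ →+ DualGroup B₁ Q₁ :=
  QuotientAddGroup.map _ _ (compRight α) <| by
    rintro _ ⟨χ, rfl⟩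
    exact ⟨χ.comp f, by simp only [compRight_apply, AddMonoidHom.comp_assoc, hα]⟩

theorem comap_mk {α : X × R₁ →+ X × R₂} {f : M₁ →+ M₂}
    (hα : (B₂.coprod Q₂).comp α = f.comp (B₁.coprod Q₁)) (ψ : X × R₂ →+ ℤ) :
    comap α f hα (QuotientAddGroup.mk ψ) = QuotientAddGroup.mk (ψ.comp α) := rfl

theorem comap_ofDual {α : X × R₁ →+ X × R₂} {f : M₁ →+ M₂}
    (hα : (B₂.coprod Q₂).comp α = f.comp (B₁.coprod Q₁))
    (hfst : (AddMonoidHom.fst X R₂).comp α = AddMonoidHom.fst X R₁) (φ : X →+ ℤ) :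
    comap α f hα (ofDual B₂ Q₂ φ) = ofDual B₁ Q₁ φ := by
  rw [ofDual_apply, comap_mk, AddMonoidHom.comp_assoc, hfst, ofDual_apply]

-- `α - α'` factors as `inr ∘ K ∘ [B₁ Q₁]`, so `ψ ∘ α - ψ ∘ α'` lies in the range of `[B₁ Q₁]⋆`.
theorem comap_eq_comap {proj₂ : M₂ →+ G} (hQ₂ : Injective Q₂) (hexact₂ : Exact Q₂ proj₂)
    {α α' : X × R₁ →+ X × R₂} {f f' : M₁ →+ M₂}
    (hα : (B₂.coprod Q₂).comp α = f.comp (B₁.coprod Q₁))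
    (hα' : (B₂.coprod Q₂).comp α' = f'.comp (B₁.coprod Q₁))
    (hfst : (AddMonoidHom.fst X R₂).comp α = (AddMonoidHom.fst X R₂).comp α')
    (hf : proj₂.comp f = proj₂.comp f') : comap α f hα = comap α' f' hα' := by
  obtain ⟨K, hK⟩ :=
    hexact₂.exists_comp_eq hQ₂ (f - f') (by rw [AddMonoidHom.comp_sub, hf, sub_self])
  have hdiff : α - α' = (AddMonoidHom.inr X R₂).comp (K.comp (B₁.coprod Q₁)) := by
    ext1 p
    have hfst_p : (α p).1 = (α' p).1 := DFunLike.congr_fun hfst p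
    refine Prod.ext (by simp [hfst_p]) (hQ₂ ?_)
    have hα_p : B₂ (α p).1 + Q₂ (α p).2 = f (B₁.coprod Q₁ p) := DFunLike.congr_fun hα p
    have hα'_p : B₂ (α' p).1 + Q₂ (α' p).2 = f' (B₁.coprod Q₁ p) := DFunLike.congr_fun hα' p
    have hK_p : Q₂ (K (B₁.coprod Q₁ p)) = f (B₁.coprod Q₁ p) - f' (B₁.coprod Q₁ p) :=
      DFunLike.congr_fun hK _
    simp only [AddMonoidHom.sub_apply, Prod.snd_sub, map_sub, AddMonoidHom.comp_apply,
      AddMonoidHom.inr_apply, hK_p, ← hα_p, ← hα'_p, hfst_p]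
    abel
  refine QuotientAddGroup.addMonoidHom_ext _ (AddMonoidHom.ext fun ψ => ?_)
  refine QuotientAddGroup.eq_iff_sub_mem.2 ⟨(ψ.comp (AddMonoidHom.inr X R₂)).comp K, ?_⟩
  rw [compRight_apply, compRight_apply, compRight_apply, ← AddMonoidHom.comp_sub, hdiff]
  rfl

theorem exists_chainMap {proj₁ : M₁ →+ G} {proj₂ : M₂ →+ G} (hQ₂ : Injective Q₂)
    (hexact₂ : Exact Q₂ proj₂) (hQ₁ : proj₁.comp Q₁ = 0) (hB : proj₁.comp B₁ = proj₂.comp B₂)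
    {f : M₁ →+ M₂} (hf : proj₂.comp f = proj₁) :
    ∃ α : X × R₁ →+ X × R₂, (AddMonoidHom.fst X R₂).comp α = AddMonoidHom.fst X R₁ ∧
      (B₂.coprod Q₂).comp α = f.comp (B₁.coprod Q₁) := by
  obtain ⟨L, hL⟩ := hexact₂.exists_comp_eq hQ₂
    (f.comp (B₁.coprod Q₁) - B₂.comp (AddMonoidHom.fst X R₁)) <| by
      ext1 ⟨x, s⟩
      have hBx : proj₁ (B₁ x) = proj₂ (B₂ x) := DFunLike.congr_fun hB x
      have hQs : proj₁ (Q₁ s) = 0 := DFunLike.congr_fun hQ₁ s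
      have hf' : ∀ m, proj₂ (f m) = proj₁ m := DFunLike.congr_fun hf
      simp [hf', hBx, hQs]
  refine ⟨(AddMonoidHom.fst X R₁).prod L, rfl, AddMonoidHom.ext fun p => ?_⟩
  have hLp : Q₂ (L p) = f (B₁.coprod Q₁ p) - B₂ p.1 := DFunLike.congr_fun hL p
  simp [hLp]

theorem comap_comp_comap_eq_id {proj₁ : M₁ →+ G} (hQ₁ : Injective Q₁) (hexact₁ : Exact Q₁ proj₁)
    {α : X × R₁ →+ X × R₂} {α' : X × R₂ →+ X × R₁} {f : M₁ →+ M₂} {f' : M₂ →+ M₁}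
    (hα : (B₂.coprod Q₂).comp α = f.comp (B₁.coprod Q₁))
    (hα' : (B₁.coprod Q₁).comp α' = f'.comp (B₂.coprod Q₂))
    (hfst : (AddMonoidHom.fst X R₂).comp α = AddMonoidHom.fst X R₁)
    (hfst' : (AddMonoidHom.fst X R₁).comp α' = AddMonoidHom.fst X R₂)
    (hff' : proj₁.comp (f'.comp f) = proj₁) :
    (comap α f hα).comp (comap α' f' hα') = AddMonoidHom.id _ := by
  have hcomp : (B₁.coprod Q₁).comp (α'.comp α) = (f'.comp f).comp (B₁.coprod Q₁) := by
    rw [← AddMonoidHom.comp_assoc, hα', AddMonoidHom.comp_assoc, hα, AddMonoidHom.comp_assoc]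
  calc (comap α f hα).comp (comap α' f' hα')
      = comap (α'.comp α) (f'.comp f) hcomp :=
        QuotientAddGroup.addMonoidHom_ext _ (AddMonoidHom.ext fun _ => rfl)
    _ = comap (AddMonoidHom.id _) (AddMonoidHom.id _) rfl :=
        comap_eq_comap hQ₁ hexact₁ hcomp rfl
          (by rw [← AddMonoidHom.comp_assoc, hfst', hfst]; rfl) (by rw [hff']; rfl)
    _ = AddMonoidHom.id _ := QuotientAddGroup.addMonoidHom_ext _ (AddMonoidHom.ext fun _ => rfl)

theorem exists_addEquiv_ofDual [Module.Projective ℤ M₁] [Module.Projective ℤ M₂]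
    {proj₁ : M₁ →+ G} {proj₂ : M₂ →+ G} (hQ₁ : Injective Q₁) (hQ₂ : Injective Q₂)
    (hexact₁ : Exact Q₁ proj₁) (hexact₂ : Exact Q₂ proj₂)
    (hproj₁ : Surjective proj₁) (hproj₂ : Surjective proj₂)
    (hB : proj₁.comp B₁ = proj₂.comp B₂) :
    ∃ e : DualGroup B₁ Q₁ ≃+ DualGroup B₂ Q₂, ∀ φ, e (ofDual B₁ Q₁ φ) = ofDual B₂ Q₂ φ := by
  obtain ⟨f, hf⟩ := exists_comp_eq_of_projective proj₂ hproj₂ proj₁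
  obtain ⟨f', hf'⟩ := exists_comp_eq_of_projective proj₁ hproj₁ proj₂
  obtain ⟨α, hαfst, hα⟩ :=
    exists_chainMap hQ₂ hexact₂ hexact₁.addMonoidHom_comp_eq_zero hB hf
  obtain ⟨α', hα'fst, hα'⟩ :=
    exists_chainMap hQ₁ hexact₁ hexact₂.addMonoidHom_comp_eq_zero hB.symm hf'
  have hff' : proj₁.comp (f'.comp f) = proj₁ := by rw [← AddMonoidHom.comp_assoc, hf', hf]
  have hf'f : proj₂.comp (f.comp f') = proj₂ := by rw [← AddMonoidHom.comp_assoc, hf, hf']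
  refine ⟨(comap α' f' hα').toAddEquiv (comap α f hα)
    (comap_comp_comap_eq_id hQ₁ hexact₁ hα hα' hαfst hα'fst hff')
    (comap_comp_comap_eq_id hQ₂ hexact₂ hα' hα hα'fst hαfst hf'f), comap_ofDual hα' hα'fst⟩

end DualGroup

section Canonical

variable (n : ℕ) (M : Type) [AddCommGroup M] [Module.IsReflexive ℤ M]

noncomputable def dualCoords : ((Fin n → ℤ) × (M →+ ℤ) →+ ℤ) ≃+ (Fin n → ℤ) × M where
  toFun ψ := ((pairingEquiv n).symm (ψ.comp (AddMonoidHom.inl _ _)),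
    (dualDualEquiv M).symm (ψ.comp (AddMonoidHom.inr _ _)))
  invFun p := (pairing n p.1).coprod (AddMonoidHom.eval p.2)
  left_inv ψ := by
    simp only
    rw [← coe_pairingEquiv, ← coe_dualDualEquiv, AddEquiv.apply_symm_apply,
      AddEquiv.apply_symm_apply, ψ.coprod_unique]
  right_inv p := by
    simp only [AddMonoidHom.coprod_comp_inl, AddMonoidHom.coprod_comp_inr, ← coe_pairingEquiv,
      ← coe_dualDualEquiv, AddEquiv.symm_apply_apply]
  map_add' ψ ψ' := by simp only [AddMonoidHom.add_comp, map_add, Prod.mk_add_mk]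

theorem dualCoords_symm_apply (x : Fin n → ℤ) (z : M) :
    (dualCoords n M).symm (x, z) = (pairing n x).coprod (AddMonoidHom.eval z) := rfl

variable {n M} {R N : Type} [AddCommGroup R] [AddCommGroup N]

theorem compRight_coprod_eval (B : (Fin n → ℤ) →+ M) (Q : R →+ M) (u : Fin n → ℤ) (v : R) :
    compRight (((compRight (AddMonoidHom.fst (Fin n → ℤ) R)).comp (pairing n)).coprod
        (compRight (C := ℤ) (B.coprod Q))) (AddMonoidHom.eval (u, v)) =
      (dualCoords n M).symm (u, B u + Q v) := by
  ext1 ⟨x, w⟩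
  simp [compRight_apply, dualCoords_symm_apply, pairing_comm]

-- The Gale dual of the canonical presentation of `β^∨ : ℤⁿ → DG(β)` is `N`.
theorem exists_addEquiv_dualGroup_compRight [Module.IsReflexive ℤ R] {Q : R →+ M} {proj : M →+ N}
    (hproj : Surjective proj) (hexact : Exact Q proj) (B : (Fin n → ℤ) →+ M) :
    ∃ Θ : DualGroup ((compRight (AddMonoidHom.fst (Fin n → ℤ) R)).comp (pairing n))
        (compRight (C := ℤ) (B.coprod Q)) ≃+ N,
      ∀ y, Θ (DualGroup.ofDual _ _ (pairing n y)) = proj (B y) := by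
  set Θ₀ := ((proj.comp B).comp (AddMonoidHom.fst _ _) - proj.comp (AddMonoidHom.snd _ _)).comp
    (dualCoords n M).toAddMonoidHom
  have hΘ₀ : ∀ x z, Θ₀ ((dualCoords n M).symm (x, z)) = proj (B x) - proj z := by simp [Θ₀]
  have hsurj : Surjective Θ₀ := fun a => by
    obtain ⟨z, rfl⟩ := hproj a
    exact ⟨(dualCoords n M).symm (0, -z), by simp [hΘ₀]⟩
  have hker : Θ₀.ker = (compRight (((compRight (AddMonoidHom.fst (Fin n → ℤ) R)).comp
      (pairing n)).coprod (compRight (C := ℤ) (B.coprod Q)))).range := by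
    ext ψ
    obtain ⟨⟨x, z⟩, rfl⟩ := (dualCoords n M).symm.surjective ψ
    rw [AddMonoidHom.mem_ker, hΘ₀, sub_eq_zero, AddMonoidHom.mem_range]
    constructor
    · intro h
      obtain ⟨v, hv⟩ := (hexact (z - B x)).1 (by rw [map_sub, h, sub_self])
      exact ⟨AddMonoidHom.eval (x, v), by rw [compRight_coprod_eval, hv, add_sub_cancel]⟩
    · rintro ⟨χ, hχ⟩
      obtain ⟨⟨u, v⟩, rfl⟩ := (dualDualEquiv _).surjective χ
      rw [coe_dualDualEquiv, compRight_coprod_eval] at hχ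
      obtain ⟨rfl, rfl⟩ := Prod.ext_iff.1 ((dualCoords n M).symm.injective hχ)
      rw [map_add, hexact.apply_apply_eq_zero, add_zero]
  refine ⟨(QuotientAddGroup.quotientAddEquivOfEq hker.symm).trans
    (QuotientAddGroup.quotientKerEquivOfSurjective Θ₀ hsurj), fun y => ?_⟩
  have hy : (pairing n y).comp (AddMonoidHom.fst _ _) = (dualCoords n M).symm (y, 0) := by
    ext1 ⟨x, w⟩
    simp [dualCoords_symm_apply]
  change Θ₀ ((pairing n y).comp (AddMonoidHom.fst _ _)) = _
  rw [hy, hΘ₀, map_zero, sub_zero]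

end Canonical

theorem compRight_injective_of_exists_zsmul_mem_range {A M : Type} [AddCommGroup A]
    [AddCommGroup M] (f : A →+ M) (hf : ∀ m, ∃ k : ℤ, k ≠ 0 ∧ k • m ∈ f.range) :
    Injective (compRight (C := ℤ) f) := by
  refine (injective_iff_map_eq_zero _).2 fun χ hχ => AddMonoidHom.ext fun m => ?_
  obtain ⟨k, hk, a, ha⟩ := hf m
  have hkm : k • χ m = 0 := by
    rw [← map_zsmul, ← ha]
    exact DFunLike.congr_fun hχ a
  exact (smul_eq_zero.1 hkm).resolve_left hk

theorem exists_zsmul_mem_range_coprod {X R M N : Type} [AddCommGroup X] [AddCommGroup R]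
    [AddCommGroup M] [AddCommGroup N] {Q : R →+ M} {proj : M →+ N} (hexact : Exact Q proj)
    (B : X →+ M) [Finite (N ⧸ (proj.comp B).range)] (w : M) :
    ∃ k : ℤ, k ≠ 0 ∧ k • w ∈ (B.coprod Q).range := by
  obtain ⟨k, hk, hkw⟩ := isOfFinAddOrder_iff_zsmul_eq_zero.1
    (isOfFinAddOrder_of_finite (proj w : N ⧸ (proj.comp B).range))
  rw [← QuotientAddGroup.mk_zsmul, QuotientAddGroup.eq_zero_iff] at hkw
  obtain ⟨x, hx⟩ := hkw
  obtain ⟨v, hv⟩ := (hexact (k • w - B x)).1 (by rw [map_sub, map_zsmul, ← hx]; exact sub_self _)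
  exact ⟨k, hk, (x, v), by simp [hv]⟩

/-- `(Q', proj', B')` presents `β^∨ ∘ pairing : ℤⁿ → DG(β)`, so that `dgDual B' Q' ∘ pairing`
is `β^∨∨`. -/
theorem stmt_4_general (n : ℕ) (N : Type) [AddCommGroup N]
    (r m : ℕ) (Q : (Fin r → ℤ) →+ (Fin m → ℤ)) (proj : (Fin m → ℤ) →+ N)
    (hprojsurj : Function.Surjective ⇑proj)
    (hexact : Function.Exact ⇑Q ⇑proj)
    (B : (Fin n → ℤ) →+ (Fin m → ℤ)) (β : (Fin n → ℤ) →+ N)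
    (hB : proj.comp B = β)
    (r' m' : ℕ) (Q' : (Fin r' → ℤ) →+ (Fin m' → ℤ))
    (proj' : (Fin m' → ℤ) →+ DGrp B Q)
    (hQ'inj : Function.Injective ⇑Q') (hproj'surj : Function.Surjective ⇑proj')
    (hexact' : Function.Exact ⇑Q' ⇑proj')
    (B' : (Fin n → ℤ) →+ (Fin m' → ℤ))
    (hB' : proj'.comp B' = (dgDual B Q).comp (pairing n)) :
    (∃ (ν : (Fin n → ℤ) ≃+ (Fin n → ℤ)) (υ : N ≃+ DGrp B' Q'),
        ∀ x, dgDual B' Q' (pairing n (ν x)) = υ (β x)) ↔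
      Finite (N ⧸ β.range) := by
  subst hB
  constructor
  · rintro ⟨ν, υ, hc⟩
    have : AddGroup.FG N := AddGroup.fg_of_surjective hprojsurj
    refine AddCommGroup.finite_of_fg_isAddTorsion _ fun q => ?_
    induction q using QuotientAddGroup.induction_on with | H a => ?_
    obtain ⟨k, hk, φ, hφ⟩ := DualGroup.exists_zsmul_eq_ofDual B' hQ'inj (υ a)
    obtain ⟨y, rfl⟩ := (pairingEquiv n).surjective φ
    refine isOfFinAddOrder_iff_zsmul_eq_zero.2 ⟨k, hk, ?_⟩
    rw [← QuotientAddGroup.mk_zsmul, QuotientAddGroup.eq_zero_iff]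
    refine ⟨ν.symm y, υ.injective ?_⟩
    rw [← hc, ν.apply_symm_apply, map_zsmul, hφ]
    rfl
  · intro hfin
    have hQc : Injective (compRight (C := ℤ) (B.coprod Q)) :=
      compRight_injective_of_exists_zsmul_mem_range _ (exists_zsmul_mem_range_coprod hexact B)
    have hexactc : Exact (compRight (C := ℤ) (B.coprod Q))
        (QuotientAddGroup.mk' (compRight (C := ℤ) (B.coprod Q)).range) :=
      fun ψ => QuotientAddGroup.eq_zero_iff ψ
    obtain ⟨e, he⟩ := DualGroup.exists_addEquiv_ofDual
      (B₂ := (compRight (AddMonoidHom.fst _ _)).comp (pairing n)) hQ'inj hQc hexact' hexactc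
      hproj'surj (QuotientAddGroup.mk'_surjective _) hB'
    obtain ⟨Θ, hΘ⟩ := exists_addEquiv_dualGroup_compRight hprojsurj hexact B
    refine ⟨AddEquiv.refl _, Θ.symm.trans e.symm, fun x => ?_⟩
    rw [AddEquiv.trans_apply, AddMonoidHom.comp_apply, ← hΘ, AddEquiv.symm_apply_apply,
      AddEquiv.eq_symm_apply]
    exact he (pairing n x)

/-- **Gale duality is an involution exactly on maps with finite cokernel.**
Let `β : ℤⁿ → N` be presented by `(Q, proj, B)`, so `DG(β) = DGrp B Q` with dual map
`β^∨`.  Let `(Q', proj', B')` be a presentation datum for the group `DG(β)` whose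
associated map `ℤⁿ ≅ (ℤⁿ)⋆ --β^∨--> DG(β)` is `β^∨` (transported along the canonical
pairing), so that `β^∨∨ = dgDual B' Q' ∘ pairing : ℤⁿ → DG(β^∨)`.  Then `β` is
isomorphic to `β^∨∨` (via compatible isomorphisms of source and target) if and only
if the cokernel of `β` is finite. -/
theorem stmt_4 (n : ℕ) (N : Type) [AddCommGroup N]
    (r m : ℕ) (Q : (Fin r → ℤ) →+ (Fin m → ℤ)) (proj : (Fin m → ℤ) →+ N)
    (hQinj : Function.Injective ⇑Q) (hprojsurj : Function.Surjective ⇑proj)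
    (hexact : Function.Exact ⇑Q ⇑proj)
    (B : (Fin n → ℤ) →+ (Fin m → ℤ)) (β : (Fin n → ℤ) →+ N)
    (hB : proj.comp B = β)
    (r' m' : ℕ) (Q' : (Fin r' → ℤ) →+ (Fin m' → ℤ))
    (proj' : (Fin m' → ℤ) →+ DGrp B Q)
    (hQ'inj : Function.Injective ⇑Q') (hproj'surj : Function.Surjective ⇑proj')
    (hexact' : Function.Exact ⇑Q' ⇑proj')
    (B' : (Fin n → ℤ) →+ (Fin m' → ℤ))
    (hB' : proj'.comp B' = (dgDual B Q).comp (pairing n)) :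
    (∃ (ν : (Fin n → ℤ) ≃+ (Fin n → ℤ)) (υ : N ≃+ DGrp B' Q'),
        ∀ x, dgDual B' Q' (pairing n (ν x)) = υ (β x)) ↔
      Finite (N ⧸ β.range) :=
  stmt_4_general n N r m Q proj hprojsurj hexact B β hB r' m' Q' proj' hQ'inj hproj'surj hexact' B'
    hB'
end

section
/- Let Σ be a complete simplicial fan in N_ℚ with rays generated by b̄_1,…,b̄_n for chosen b_i ∈ N. The deformed group ring ℚ[N]^Σ, with underlying vector space ⊕_{c∈N} ℚ·y^c and product y^{c₁}·y^{c₂} = y^{c₁+c₂} if c̄₁ and c̄₂ lie in a common cone of Σ and 0 otherwise, is an associative commutative ring with identity y^0. -/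
/-- The (simplicial) cone in `V` spanned by the rays `w i`, `i ∈ S`. -/
def coneOf {V : Type} [AddCommGroup V] [Module ℚ V] {n : ℕ}
    (w : Fin n → V) (S : Finset (Fin n)) : Set V :=
  {x | ∃ q : Fin n → ℚ, (∀ i, 0 ≤ q i) ∧ (∀ i, i ∉ S → q i = 0) ∧
    x = ∑ i, q i • w i}

/-- The multiplication of the deformed group ring `ℚ[N]^Σ`: on the ℚ-vector space
`⊕_{c ∈ N} ℚ·y^c = (N →₀ ℚ)` it is given on monomials by
`y^{c₁} · y^{c₂} = y^{c₁+c₂}` if `bar c₁` and `bar c₂` lie in a common cone of the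
fan (with cones `coneOf w S`, `S ∈ Δ`), and `0` otherwise. -/
noncomputable def dmul {N V : Type} [AddCommGroup N] [AddCommGroup V] [Module ℚ V]
    {n : ℕ} (bar : N →+ V) (w : Fin n → V) (Δ : Finset (Finset (Fin n)))
    (f g : N →₀ ℚ) : N →₀ ℚ :=
  open Classical in
  f.sum fun c₁ a => g.sum fun c₂ b =>
    if ∃ S ∈ Δ, bar c₁ ∈ coneOf w S ∧ bar c₂ ∈ coneOf w S then
      Finsupp.single (c₁ + c₂) (a * b)
    else 0

/-!
The product is biadditive, so it suffices to check the ring axioms on monomials `y^c`.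
Commutativity and the unit are immediate (`0` lies in every cone and, by completeness,
every `bar c` lies in some cone). For associativity, both `(y^{c₁} y^{c₂}) y^{c₃}` and
`y^{c₁} (y^{c₂} y^{c₃})` are nonzero exactly when `bar c₁, bar c₂, bar c₃` lie in one common
cone. The nontrivial direction: if `x₁, x₂ ∈ σ` and `x₁ + x₂ ∈ τ`, then
`x₁ + x₂ ∈ σ ∩ τ`, a face of the simplicial cone `σ`; since coordinates in `σ` are unique and
nonnegative, `x₁` and `x₂` themselves lie in that face, hence in `τ`.
-/

section Cones

variable {V : Type} [AddCommGroup V] [Module ℚ V] {n : ℕ} {w : Fin n → V}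

theorem zero_mem_coneOf (S : Finset (Fin n)) : (0 : V) ∈ coneOf w S :=
  ⟨0, fun _ => le_rfl, fun _ _ => rfl, by simp⟩

theorem add_mem_coneOf {S : Finset (Fin n)} {x y : V}
    (hx : x ∈ coneOf w S) (hy : y ∈ coneOf w S) : x + y ∈ coneOf w S := by
  obtain ⟨q, hq₀, hqS, rfl⟩ := hx
  obtain ⟨r, hr₀, hrS, rfl⟩ := hy
  refine ⟨q + r, fun i => add_nonneg (hq₀ i) (hr₀ i),
    fun i hi => by simp [hqS i hi, hrS i hi], ?_⟩
  simp [add_smul, Finset.sum_add_distrib]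

theorem sum_smul_eq_sum_smul_of_support_subset {S : Finset (Fin n)} {q : Fin n → ℚ}
    (hq : ∀ i ∉ S, q i = 0) : ∑ i, q i • w i = ∑ i ∈ S, q i • w i :=
  (Finset.sum_subset (Finset.subset_univ S) fun i _ hi => by simp [hq i hi]).symm

theorem eq_of_sum_smul_eq_of_linearIndependent {S : Finset (Fin n)}
    (hS : LinearIndependent ℚ fun i : S => w i.1) {q r : Fin n → ℚ}
    (hq : ∀ i ∉ S, q i = 0) (hr : ∀ i ∉ S, r i = 0)
    (h : ∑ i, q i • w i = ∑ i, r i • w i) : q = r := by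
  rw [sum_smul_eq_sum_smul_of_support_subset hq,
    sum_smul_eq_sum_smul_of_support_subset hr] at h
  funext i
  by_cases hi : i ∈ S
  · exact linearIndepOn_finset_iffₛ.mp hS q r h i hi
  · rw [hq i hi, hr i hi]

theorem left_mem_coneOf_of_add_mem {S T : Finset (Fin n)}
    (hS : LinearIndependent ℚ fun i : S => w i.1) (hTS : T ⊆ S) {x y : V}
    (hx : x ∈ coneOf w S) (hy : y ∈ coneOf w S) (hxy : x + y ∈ coneOf w T) :
    x ∈ coneOf w T := by
  obtain ⟨q, hq₀, hqS, rfl⟩ := hx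
  obtain ⟨q', hq'₀, hq'S, rfl⟩ := hy
  obtain ⟨r, -, hrT, hr⟩ := hxy
  have hqr : q + q' = r := by
    refine eq_of_sum_smul_eq_of_linearIndependent hS
      (fun i hi => by simp [hqS i hi, hq'S i hi]) (fun i hi => hrT i (hi <| hTS ·)) ?_
    simpa [add_smul, Finset.sum_add_distrib] using hr
  refine ⟨q, hq₀, fun i hi => ?_, rfl⟩
  have : q i + q' i = 0 := by rw [← Pi.add_apply, hqr, hrT i hi]
  linarith [hq₀ i, hq'₀ i]

end Cones

section CommonCone

variable {V : Type} [AddCommGroup V] [Module ℚ V] {n : ℕ}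
  (w : Fin n → V) (Δ : Finset (Finset (Fin n)))

def CommonCone (x y : V) : Prop :=
  ∃ S ∈ Δ, x ∈ coneOf w S ∧ y ∈ coneOf w S

variable {w Δ}

theorem CommonCone.symm {x y : V} (h : CommonCone w Δ x y) : CommonCone w Δ y x :=
  let ⟨S, hS, hx, hy⟩ := h
  ⟨S, hS, hy, hx⟩

theorem commonCone_and_commonCone_add_iff
    (hind : ∀ S ∈ Δ, LinearIndependent ℚ fun i : S => w i.1)
    (hglue : ∀ S ∈ Δ, ∀ T ∈ Δ, coneOf w S ∩ coneOf w T = coneOf w (S ∩ T)) (x y z : V) :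
    CommonCone w Δ x y ∧ CommonCone w Δ (x + y) z ↔
      ∃ S ∈ Δ, x ∈ coneOf w S ∧ y ∈ coneOf w S ∧ z ∈ coneOf w S := by
  constructor
  · rintro ⟨⟨S, hS, hx, hy⟩, T, hT, hxy, hz⟩
    have hxyST : x + y ∈ coneOf w (S ∩ T) := by
      rw [← hglue S hS T hT]
      exact ⟨add_mem_coneOf hx hy, hxy⟩
    have hxST := left_mem_coneOf_of_add_mem (hind S hS) Finset.inter_subset_left hx hy hxyST
    have hyST := left_mem_coneOf_of_add_mem (hind S hS) Finset.inter_subset_left hy hx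
      (add_comm x y ▸ hxyST)
    rw [← hglue S hS T hT] at hxST hyST
    exact ⟨T, hT, hxST.2, hyST.2, hz⟩
  · rintro ⟨S, hS, hx, hy, hz⟩
    exact ⟨⟨S, hS, hx, hy⟩, S, hS, add_mem_coneOf hx hy, hz⟩

theorem commonCone_assoc
    (hind : ∀ S ∈ Δ, LinearIndependent ℚ fun i : S => w i.1)
    (hglue : ∀ S ∈ Δ, ∀ T ∈ Δ, coneOf w S ∩ coneOf w T = coneOf w (S ∩ T)) (x y z : V) :
    CommonCone w Δ x y ∧ CommonCone w Δ (x + y) z ↔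
      CommonCone w Δ y z ∧ CommonCone w Δ x (y + z) := by
  have hsymm : CommonCone w Δ x (y + z) ↔ CommonCone w Δ (y + z) x := ⟨.symm, .symm⟩
  rw [hsymm, commonCone_and_commonCone_add_iff hind hglue,
    commonCone_and_commonCone_add_iff hind hglue]
  exact exists_congr fun S => and_congr_right fun _ => by tauto

end CommonCone

section DeformedProduct

variable {N V : Type} [AddCommGroup N] [AddCommGroup V] [Module ℚ V]
  {n : ℕ} {bar : N →+ V} {w : Fin n → V} {Δ : Finset (Finset (Fin n))}

theorem dmul_zero (f : N →₀ ℚ) : dmul bar w Δ f 0 = 0 := by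
  simp [dmul]

theorem zero_dmul (g : N →₀ ℚ) : dmul bar w Δ 0 g = 0 := by
  simp [dmul]

theorem dmul_add (f g h : N →₀ ℚ) :
    dmul bar w Δ f (g + h) = dmul bar w Δ f g + dmul bar w Δ f h := by
  unfold dmul
  rw [← Finsupp.sum_add]
  refine Finsupp.sum_congr fun c₁ _ => Finsupp.sum_add_index' (fun c₂ => ?_) fun c₂ b₁ b₂ => ?_
  · split <;> simp
  · split <;> simp [mul_add, Finsupp.single_add]

theorem add_dmul (f g h : N →₀ ℚ) :
    dmul bar w Δ (f + g) h = dmul bar w Δ f h + dmul bar w Δ g h := by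
  unfold dmul
  refine Finsupp.sum_add_index' (fun c₁ => by simp) fun c₁ a₁ a₂ => ?_
  rw [← Finsupp.sum_add]
  refine Finsupp.sum_congr fun c₂ _ => ?_
  split <;> simp [add_mul, Finsupp.single_add]

open Classical in
theorem dmul_single_single (c₁ c₂ : N) (a b : ℚ) :
    dmul bar w Δ (Finsupp.single c₁ a) (Finsupp.single c₂ b) =
      if CommonCone w Δ (bar c₁) (bar c₂) then Finsupp.single (c₁ + c₂) (a * b) else 0 := by
  unfold dmul
  rw [Finsupp.sum_single_index, Finsupp.sum_single_index]
  · exact if_congr Iff.rfl rfl rfl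
  · split <;> simp
  · simp

open Classical in
theorem dmul_dmul_single_single_single (c₁ c₂ c₃ : N) (a b d : ℚ) :
    dmul bar w Δ (dmul bar w Δ (Finsupp.single c₁ a) (Finsupp.single c₂ b))
        (Finsupp.single c₃ d) =
      if CommonCone w Δ (bar c₁) (bar c₂) ∧ CommonCone w Δ (bar c₁ + bar c₂) (bar c₃) then
        Finsupp.single (c₁ + c₂ + c₃) (a * b * d)
      else 0 := by
  rw [dmul_single_single]
  by_cases h₁₂ : CommonCone w Δ (bar c₁) (bar c₂)
  · rw [if_pos h₁₂, dmul_single_single, map_add]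
    exact if_congr (and_iff_right h₁₂).symm rfl rfl
  · rw [if_neg h₁₂, zero_dmul, if_neg fun h => h₁₂ h.1]

open Classical in
theorem dmul_single_dmul_single_single (c₁ c₂ c₃ : N) (a b d : ℚ) :
    dmul bar w Δ (Finsupp.single c₁ a)
        (dmul bar w Δ (Finsupp.single c₂ b) (Finsupp.single c₃ d)) =
      if CommonCone w Δ (bar c₂) (bar c₃) ∧ CommonCone w Δ (bar c₁) (bar c₂ + bar c₃) then
        Finsupp.single (c₁ + (c₂ + c₃)) (a * (b * d))
      else 0 := by
  rw [dmul_single_single (c₁ := c₂)]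
  by_cases h₂₃ : CommonCone w Δ (bar c₂) (bar c₃)
  · rw [if_pos h₂₃, dmul_single_single, map_add]
    exact if_congr (and_iff_right h₂₃).symm rfl rfl
  · rw [if_neg h₂₃, dmul_zero, if_neg fun h => h₂₃ h.1]

theorem dmul_comm (f g : N →₀ ℚ) : dmul bar w Δ f g = dmul bar w Δ g f := by
  classical
  induction f using Finsupp.induction_linear generalizing g with
  | zero => rw [zero_dmul, dmul_zero]
  | add f₁ f₂ ih₁ ih₂ => rw [add_dmul, dmul_add, ih₁, ih₂]
  | single c₁ a =>
    induction g using Finsupp.induction_linear with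
    | zero => rw [zero_dmul, dmul_zero]
    | add g₁ g₂ ih₁ ih₂ => rw [add_dmul, dmul_add, ih₁, ih₂]
    | single c₂ b =>
      rw [dmul_single_single, dmul_single_single, add_comm c₁, mul_comm a]
      exact if_congr ⟨.symm, .symm⟩ rfl rfl

theorem dmul_assoc
    (hind : ∀ S ∈ Δ, LinearIndependent ℚ fun i : S => w i.1)
    (hglue : ∀ S ∈ Δ, ∀ T ∈ Δ, coneOf w S ∩ coneOf w T = coneOf w (S ∩ T))
    (f g h : N →₀ ℚ) :
    dmul bar w Δ (dmul bar w Δ f g) h = dmul bar w Δ f (dmul bar w Δ g h) := by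
  classical
  induction f using Finsupp.induction_linear generalizing g h with
  | zero => simp only [zero_dmul]
  | add f₁ f₂ ih₁ ih₂ => rw [add_dmul, add_dmul, add_dmul, ih₁, ih₂]
  | single c₁ a =>
    induction g using Finsupp.induction_linear generalizing h with
    | zero => simp only [zero_dmul, dmul_zero]
    | add g₁ g₂ ih₁ ih₂ => rw [dmul_add, add_dmul, add_dmul, dmul_add, ih₁, ih₂]
    | single c₂ b =>
      induction h using Finsupp.induction_linear with
      | zero => simp only [dmul_zero]
      | add h₁ h₂ ih₁ ih₂ => rw [dmul_add, dmul_add, dmul_add, ih₁, ih₂]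
      | single c₃ d =>
        rw [dmul_dmul_single_single_single, dmul_single_dmul_single_single, add_assoc,
          mul_assoc]
        exact if_congr (commonCone_assoc hind hglue _ _ _) rfl rfl

theorem single_zero_one_dmul (hcomplete : ∀ x : V, ∃ S ∈ Δ, x ∈ coneOf w S)
    (f : N →₀ ℚ) : dmul bar w Δ (Finsupp.single 0 1) f = f := by
  induction f using Finsupp.induction_linear with
  | zero => rw [dmul_zero]
  | add f₁ f₂ ih₁ ih₂ => rw [dmul_add, ih₁, ih₂]
  | single c a =>
    obtain ⟨S, hS, hc⟩ := hcomplete (bar c)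
    have h : CommonCone w Δ (bar 0) (bar c) := ⟨S, hS, by simpa using zero_mem_coneOf S, hc⟩
    rw [dmul_single_single, if_pos h, zero_add, one_mul]

end DeformedProduct

theorem stmt_7_general (N V : Type) [AddCommGroup N] [AddCommGroup V] [Module ℚ V]
    (n : ℕ) (bar : N →+ V) (w : Fin n → V) (Δ : Finset (Finset (Fin n)))
    (hind : ∀ S ∈ Δ, LinearIndependent ℚ fun i : S => w i.1)
    (hglue : ∀ S ∈ Δ, ∀ T ∈ Δ, coneOf w S ∩ coneOf w T = coneOf w (S ∩ T))
    (hcomplete : ∀ x : V, ∃ S ∈ Δ, x ∈ coneOf w S) :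
    (∀ f g h : N →₀ ℚ,
        dmul bar w Δ (dmul bar w Δ f g) h = dmul bar w Δ f (dmul bar w Δ g h)) ∧
    (∀ f g : N →₀ ℚ, dmul bar w Δ f g = dmul bar w Δ g f) ∧
    (∀ f : N →₀ ℚ, dmul bar w Δ (Finsupp.single 0 1) f = f) :=
  ⟨dmul_assoc hind hglue, dmul_comm, single_zero_one_dmul hcomplete⟩

/-- **The deformed group ring of a complete simplicial fan is an associative,
commutative, unital ring.**  Let `Σ` be a complete simplicial fan in `N_ℚ`,
described by a collection `Δ` of index sets of cones (each spanned by linearly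
independent rays `w i`, closed under faces, any two cones meeting along the common
face, and covering all of `N_ℚ`).  Then the deformed product on
`ℚ[N]^Σ = (N →₀ ℚ)` is associative and commutative with identity `y^0`. -/
theorem stmt_7 (N V : Type) [AddCommGroup N] [AddCommGroup V] [Module ℚ V]
    (n : ℕ) (bar : N →+ V) (w : Fin n → V) (Δ : Finset (Finset (Fin n)))
    (hind : ∀ S ∈ Δ, LinearIndependent ℚ fun i : S => w i.1)
    (hdown : ∀ S ∈ Δ, ∀ T ⊆ S, T ∈ Δ)
    (hglue : ∀ S ∈ Δ, ∀ T ∈ Δ, coneOf w S ∩ coneOf w T = coneOf w (S ∩ T))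
    (hcomplete : ∀ x : V, ∃ S ∈ Δ, x ∈ coneOf w S) :
    (∀ f g h : N →₀ ℚ,
        dmul bar w Δ (dmul bar w Δ f g) h = dmul bar w Δ f (dmul bar w Δ g h)) ∧
    (∀ f g : N →₀ ℚ, dmul bar w Δ f g = dmul bar w Δ g f) ∧
    (∀ f : N →₀ ℚ, dmul bar w Δ (Finsupp.single 0 1) f = f) :=
  stmt_7_general N V n bar w Δ hind hglue hcomplete
end

section
/- Let Σ be a complete simplicial fan in N_ℚ with n rays generated by b̄_1,…,b̄_n. The subring S_Σ of the deformed group ring generated by y^{b_1},…,y^{b_n} is isomorphic as a graded ring to the Stanley-Reisner ring ℚ[x_1,…,x_n]/I_Σ, where I_Σ is generated by the square-free monomials x_{i₁}⋯x_{i_s} such that ρ_{i₁} + ⋯ + ρ_{i_s} is not a cone of Σ. -/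
/-- The subring `S_Σ ⊆ ℚ[N]^Σ` generated by the monomials `y^{b i}`: its underlying
`ℚ`-vector space is spanned by the monomials `y^{∑ k i • b i}` whose support
`{i | k i ≠ 0}` lies in a cone of the fan. -/
noncomputable def SRing {N : Type} [AddCommGroup N] {n : ℕ}
    (b : Fin n → N) (Δ : Finset (Finset (Fin n))) : Submodule ℚ (N →₀ ℚ) :=
  Submodule.span ℚ {f | ∃ k : Fin n → ℕ, (∃ S ∈ Δ, ∀ i, k i ≠ 0 → i ∈ S) ∧
    f = Finsupp.single (∑ i, k i • b i) 1}

/-- The Stanley-Reisner ideal `I_Σ` of the fan with cone index sets `Δ`: the ideal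
generated by the square-free monomials `∏_{i ∈ S} x_i` for which `S` is not (contained
in) a cone of `Σ`. -/
noncomputable def srIdeal {n : ℕ} (Δ : Finset (Finset (Fin n))) : Ideal (MvPolynomial (Fin n) ℚ) :=
  Ideal.span {p | ∃ S : Finset (Fin n), S ∉ Δ ∧ p = ∏ i ∈ S, MvPolynomial.X i}

/-!
Send `x^m` to `y^{∑ mᵢ bᵢ}` when the support of `m` lies in a cone of `Σ`, and to `0`
otherwise; this is a `ℚ`-linear map `ℚ[x] → ℚ[N]^Σ` onto `S_Σ`. Since the cones are simplicial
and meet along common faces, for `m` supported in a cone the point `∑ mᵢ b̄ᵢ` lies in the cone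
`σ_T` exactly when `supp m ⊆ T`, and `∑ mᵢ bᵢ` determines `m`. Injectivity lets one read off
the coefficient of every such `x^m` from the image, so the kernel is spanned by the monomials
whose support lies in no cone, which is the monomial ideal `I_Σ` because the fan is closed under
taking faces. The cone criterion turns the deformed product `y^{c₁} y^{c₂}` of two such images
into the condition that `supp (m + m')` lies in a cone, which is multiplicativity.
-/

namespace StanleyReisner

open MvPolynomial

variable {N V : Type} [AddCommGroup N] [AddCommGroup V] [Module ℚ V] {n : ℕ}

def SupportedInCone (Δ : Finset (Finset (Fin n))) (m : Fin n →₀ ℕ) : Prop :=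
  ∃ S ∈ Δ, m.support ⊆ S

def latticePoint (b : Fin n → N) (m : Fin n →₀ ℕ) : N := ∑ i, m i • b i

theorem latticePoint_add (b : Fin n → N) (m m' : Fin n →₀ ℕ) :
    latticePoint b (m + m') = latticePoint b m + latticePoint b m' := by
  simp only [latticePoint, Finsupp.add_apply, add_smul, Finset.sum_add_distrib]

theorem supportedInCone_add_iff {Δ : Finset (Finset (Fin n))} {m m' : Fin n →₀ ℕ} :
    SupportedInCone Δ (m + m') ↔ ∃ S ∈ Δ, m.support ⊆ S ∧ m'.support ⊆ S := by
  classical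
  simp only [SupportedInCone, Finsupp.support_add_eq_union, Finset.union_subset_iff]

theorem SupportedInCone.mono {Δ : Finset (Finset (Fin n))} {m m' : Fin n →₀ ℕ}
    (hm : SupportedInCone Δ m) (hle : m' ≤ m) : SupportedInCone Δ m' :=
  let ⟨S, hS, hmS⟩ := hm
  ⟨S, hS, (Finsupp.support_mono hle).trans hmS⟩

theorem natCast_eq_zero_of_support_subset {m : Fin n →₀ ℕ} {S : Finset (Fin n)}
    (h : m.support ⊆ S) : ∀ i ∉ S, (m i : ℚ) = 0 := fun i hi => by
  simpa using Finsupp.notMem_support_iff.mp fun hmi => hi (h hmi)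

section Fan

variable {bar : N →+ V} {b : Fin n → N} {w : Fin n → V} {Δ : Finset (Finset (Fin n))}

theorem eq_of_sum_smul_eq {S : Finset (Fin n)} (hS : LinearIndependent ℚ fun i : S => w i.1)
    {p q : Fin n → ℚ}
    (hp : ∀ i ∉ S, p i = 0) (hq : ∀ i ∉ S, q i = 0)
    (h : ∑ i, p i • w i = ∑ i, q i • w i) : p = q := by
  have hsub : ∀ r : Fin n → ℚ, (∀ i ∉ S, r i = 0) → ∑ i ∈ S, r i • w i = ∑ i, r i • w i :=
    fun r hr => Finset.sum_subset (Finset.subset_univ S) fun i _ hi => by simp [hr i hi]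
  have hzero : ∑ i ∈ S, (p - q) i • w i = 0 := by
    rw [hsub _ fun i hi => by simp [hp i hi, hq i hi]]
    simp [sub_smul, Finset.sum_sub_distrib, h]
  funext i
  by_cases hi : i ∈ S
  · exact sub_eq_zero.mp (linearIndepOn_iff'.mp hS S _ subset_rfl hzero i hi)
  · rw [hp i hi, hq i hi]

theorem bar_latticePoint (hw : w = fun i => bar (b i)) (m : Fin n →₀ ℕ) :
    bar (latticePoint b m) = ∑ i, (m i : ℚ) • w i := by
  simp only [latticePoint, map_sum, map_nsmul, hw, Nat.cast_smul_eq_nsmul]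

theorem bar_latticePoint_mem_coneOf (hw : w = fun i => bar (b i)) {m : Fin n →₀ ℕ}
    {T : Finset (Fin n)} (hmT : m.support ⊆ T) : bar (latticePoint b m) ∈ coneOf w T :=
  ⟨_, fun i => by positivity, natCast_eq_zero_of_support_subset hmT, bar_latticePoint hw m⟩

theorem latticePoint_mem_coneOf_iff (hw : w = fun i => bar (b i))
    (hind : ∀ S ∈ Δ, LinearIndependent ℚ fun i : S => w i.1)
    (hglue : ∀ S ∈ Δ, ∀ T ∈ Δ, coneOf w S ∩ coneOf w T = coneOf w (S ∩ T))
    {m : Fin n →₀ ℕ} (hm : SupportedInCone Δ m) {T : Finset (Fin n)} (hT : T ∈ Δ) :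
    bar (latticePoint b m) ∈ coneOf w T ↔ m.support ⊆ T := by
  refine ⟨fun hmT => ?_, bar_latticePoint_mem_coneOf hw⟩
  obtain ⟨S, hS, hmS⟩ := hm
  obtain ⟨q, -, hqST, hq⟩ : bar (latticePoint b m) ∈ coneOf w (S ∩ T) := by
    rw [← hglue S hS T hT]
    exact ⟨bar_latticePoint_mem_coneOf hw hmS, hmT⟩
  have hmq : (fun i => (m i : ℚ)) = q :=
    eq_of_sum_smul_eq (hind S hS) (natCast_eq_zero_of_support_subset hmS)
      (fun i hi => hqST i (mt Finset.mem_of_mem_inter_left hi))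
      ((bar_latticePoint hw m).symm.trans hq)
  intro i hi
  by_contra hiT
  have hmi : (m i : ℚ) = 0 := (congrFun hmq i).trans (hqST i (mt Finset.mem_of_mem_inter_right hiT))
  exact Finsupp.mem_support_iff.mp hi (by exact_mod_cast hmi)

theorem latticePoint_injOn (hw : w = fun i => bar (b i))
    (hind : ∀ S ∈ Δ, LinearIndependent ℚ fun i : S => w i.1)
    (hglue : ∀ S ∈ Δ, ∀ T ∈ Δ, coneOf w S ∩ coneOf w T = coneOf w (S ∩ T)) :
    Set.InjOn (latticePoint b) {m | SupportedInCone Δ m} := by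
  rintro m hm m' ⟨T, hT, hm'T⟩ h
  have hmT : m.support ⊆ T :=
    (latticePoint_mem_coneOf_iff hw hind hglue hm hT).mp (h ▸ bar_latticePoint_mem_coneOf hw hm'T)
  have hmm' := eq_of_sum_smul_eq (hind T hT) (natCast_eq_zero_of_support_subset hmT)
    (natCast_eq_zero_of_support_subset hm'T)
    (by rw [← bar_latticePoint hw, ← bar_latticePoint hw, h])
  ext i
  exact_mod_cast congrFun hmm' i

theorem supportedInCone_add_iff_exists_coneOf (hw : w = fun i => bar (b i))
    (hind : ∀ S ∈ Δ, LinearIndependent ℚ fun i : S => w i.1)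
    (hglue : ∀ S ∈ Δ, ∀ T ∈ Δ, coneOf w S ∩ coneOf w T = coneOf w (S ∩ T))
    {m m' : Fin n →₀ ℕ} (hm : SupportedInCone Δ m) (hm' : SupportedInCone Δ m') :
    SupportedInCone Δ (m + m') ↔
      ∃ S ∈ Δ, bar (latticePoint b m) ∈ coneOf w S ∧ bar (latticePoint b m') ∈ coneOf w S := by
  rw [supportedInCone_add_iff]
  refine exists_congr fun S => and_congr_right fun hS => ?_
  rw [latticePoint_mem_coneOf_iff hw hind hglue hm hS,
    latticePoint_mem_coneOf_iff hw hind hglue hm' hS]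

end Fan

section MonomialMap

variable (b : Fin n → N) (Δ : Finset (Finset (Fin n)))

open Classical in
noncomputable def monomialMap : MvPolynomial (Fin n) ℚ →ₗ[ℚ] N →₀ ℚ :=
  (basisMonomials (Fin n) ℚ).constr ℚ
    fun m => if SupportedInCone Δ m then Finsupp.single (latticePoint b m) 1 else 0

open Classical in
theorem monomialMap_monomial (m : Fin n →₀ ℕ) (a : ℚ) :
    monomialMap b Δ (monomial m a) =
      if SupportedInCone Δ m then Finsupp.single (latticePoint b m) a else 0 := by
  have h := (basisMonomials (Fin n) ℚ).constr_basis ℚ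
    (fun m => if SupportedInCone Δ m then Finsupp.single (latticePoint b m) (1 : ℚ) else 0) m
  rw [coe_basisMonomials] at h
  rw [← mul_one a, ← smul_eq_mul, ← smul_monomial, map_smul, monomialMap, h]
  split_ifs <;> simp

theorem supportedInCone_equivFunOnFinite_symm (k : Fin n → ℕ) :
    SupportedInCone Δ (Finsupp.equivFunOnFinite.symm k) ↔ ∃ S ∈ Δ, ∀ i, k i ≠ 0 → i ∈ S := by
  simp only [SupportedInCone, Finset.subset_iff, Finsupp.mem_support_iff,
    Finsupp.coe_equivFunOnFinite_symm]

theorem range_monomialMap : LinearMap.range (monomialMap b Δ) = SRing b Δ := by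
  refine le_antisymm ?_ (Submodule.span_le.mpr ?_)
  · rw [← Submodule.map_top, ← (basisMonomials (Fin n) ℚ).span_eq, Submodule.map_span,
      Submodule.span_le]
    rintro _ ⟨_, ⟨m, rfl⟩, rfl⟩
    rw [coe_basisMonomials, SetLike.mem_coe, monomialMap_monomial]
    split_ifs with hm
    · refine Submodule.subset_span ⟨m, ?_, rfl⟩
      rwa [← supportedInCone_equivFunOnFinite_symm, Finsupp.equivFunOnFinite_symm_coe]
    · exact zero_mem _
  · rintro _ ⟨k, hk, rfl⟩
    refine ⟨monomial (Finsupp.equivFunOnFinite.symm k) 1, ?_⟩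
    rw [monomialMap_monomial, if_pos ((supportedInCone_equivFunOnFinite_symm Δ k).mpr hk)]
    rfl

theorem monomialMap_apply_latticePoint {bar : N →+ V} {w : Fin n → V}
    (hw : w = fun i => bar (b i))
    (hind : ∀ S ∈ Δ, LinearIndependent ℚ fun i : S => w i.1)
    (hglue : ∀ S ∈ Δ, ∀ T ∈ Δ, coneOf w S ∩ coneOf w T = coneOf w (S ∩ T))
    {m₀ : Fin n →₀ ℕ} (hm₀ : SupportedInCone Δ m₀) (x : MvPolynomial (Fin n) ℚ) :
    monomialMap b Δ x (latticePoint b m₀) = coeff m₀ x := by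
  suffices (Finsupp.lapply (latticePoint b m₀)).comp (monomialMap b Δ) = lcoeff ℚ m₀ from
    LinearMap.congr_fun this x
  refine (basisMonomials (Fin n) ℚ).ext fun m => ?_
  rw [coe_basisMonomials, LinearMap.comp_apply, monomialMap_monomial, lcoeff_apply,
    coeff_monomial]
  by_cases hmm₀ : m = m₀
  · simp [hmm₀, hm₀]
  · split_ifs with hm
    · exact Finsupp.single_eq_of_ne fun h =>
        hmm₀ (latticePoint_injOn hw hind hglue hm hm₀ h.symm)
    · rfl

end MonomialMap

section Ideal

variable {Δ : Finset (Finset (Fin n))}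

theorem sum_single_one_le_iff {S : Finset (Fin n)} {m : Fin n →₀ ℕ} :
    ∑ j ∈ S, Finsupp.single j 1 ≤ m ↔ S ⊆ m.support := by
  simp only [Finsupp.le_def, Finsupp.finsetSum_apply, Finsupp.single_apply, Finset.sum_ite_eq',
    Finset.subset_iff, Finsupp.mem_support_iff]
  refine forall_congr' fun i => ?_
  split_ifs with hi <;> simp [hi, Nat.one_le_iff_ne_zero]

theorem srIdeal_eq_span_monomial :
    srIdeal Δ = Ideal.span ((fun m => monomial m (1 : ℚ)) ''
      {m | ∃ S ∉ Δ, m = ∑ j ∈ S, Finsupp.single j 1}) := by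
  have hprod : ∀ S : Finset (Fin n),
      ∏ i ∈ S, (X i : MvPolynomial (Fin n) ℚ) = monomial (∑ j ∈ S, Finsupp.single j 1) 1 :=
    fun S => (monomial_sum_one S _).symm
  rw [srIdeal]
  congr 1
  ext p
  constructor
  · rintro ⟨S, hS, rfl⟩
    exact ⟨_, ⟨S, hS, rfl⟩, (hprod S).symm⟩
  · rintro ⟨_, ⟨S, hS, rfl⟩, rfl⟩
    exact ⟨S, hS, (hprod S).symm⟩

theorem mem_srIdeal_iff (hdown : ∀ S ∈ Δ, ∀ T ⊆ S, T ∈ Δ) {x : MvPolynomial (Fin n) ℚ} :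
    x ∈ srIdeal Δ ↔ ∀ m ∈ x.support, ¬ SupportedInCone Δ m := by
  rw [srIdeal_eq_span_monomial, mem_ideal_span_monomial_image]
  refine forall₂_congr fun m _ => ⟨?_, fun hm => ⟨_, ⟨m.support, fun h => hm ⟨_, h, subset_rfl⟩,
    rfl⟩, sum_single_one_le_iff.mpr subset_rfl⟩⟩
  rintro ⟨_, ⟨S, hS, rfl⟩, hSm⟩ ⟨T, hT, hmT⟩
  exact hS (hdown T hT S ((sum_single_one_le_iff.mp hSm).trans hmT))

end Ideal

theorem ker_monomialMap {bar : N →+ V} {b : Fin n → N} {w : Fin n → V}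
    {Δ : Finset (Finset (Fin n))} (hw : w = fun i => bar (b i))
    (hind : ∀ S ∈ Δ, LinearIndependent ℚ fun i : S => w i.1)
    (hdown : ∀ S ∈ Δ, ∀ T ⊆ S, T ∈ Δ)
    (hglue : ∀ S ∈ Δ, ∀ T ∈ Δ, coneOf w S ∩ coneOf w T = coneOf w (S ∩ T)) :
    LinearMap.ker (monomialMap b Δ) = (srIdeal Δ).restrictScalars ℚ := by
  ext x
  rw [LinearMap.mem_ker, Submodule.restrictScalars_mem, mem_srIdeal_iff hdown]
  constructor
  · intro hx m hm hmΔ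
    refine mem_support_iff.mp hm ?_
    rw [← monomialMap_apply_latticePoint b Δ hw hind hglue hmΔ, hx, Finsupp.zero_apply]
  · intro hx
    rw [x.as_sum, map_sum]
    exact Finset.sum_eq_zero fun m hm => by rw [monomialMap_monomial, if_neg (hx m hm)]

section DeformedProduct

variable (bar : N →+ V) (w : Fin n → V) (Δ : Finset (Finset (Fin n)))

open Classical in
noncomputable def deformedMul : (N →₀ ℚ) →ₗ[ℚ] (N →₀ ℚ) →ₗ[ℚ] N →₀ ℚ :=
  Finsupp.lsum ℚ fun c₁ => LinearMap.toSpanSingleton ℚ _ <| Finsupp.lsum ℚ fun c₂ =>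
    LinearMap.toSpanSingleton ℚ _ <|
      if ∃ S ∈ Δ, bar c₁ ∈ coneOf w S ∧ bar c₂ ∈ coneOf w S then Finsupp.single (c₁ + c₂) 1
      else 0

theorem dmul_eq_deformedMul (f g : N →₀ ℚ) : dmul bar w Δ f g = deformedMul bar w Δ f g := by
  rw [dmul, deformedMul, Finsupp.lsum_apply, LinearMap.finsupp_sum_apply]
  refine Finsupp.sum_congr fun c₁ _ => ?_
  rw [LinearMap.toSpanSingleton_apply, LinearMap.smul_apply, Finsupp.lsum_apply,
    Finsupp.smul_sum]
  refine Finsupp.sum_congr fun c₂ _ => ?_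
  rw [LinearMap.toSpanSingleton_apply]
  split_ifs
  · simp [Finsupp.smul_single, mul_comm]
  · simp

open Classical in
theorem deformedMul_single_single (c₁ c₂ : N) (a₁ a₂ : ℚ) :
    deformedMul bar w Δ (Finsupp.single c₁ a₁) (Finsupp.single c₂ a₂) =
      if ∃ S ∈ Δ, bar c₁ ∈ coneOf w S ∧ bar c₂ ∈ coneOf w S then
        Finsupp.single (c₁ + c₂) (a₁ * a₂) else 0 := by
  simp only [deformedMul, Finsupp.lsum_single, LinearMap.toSpanSingleton_apply,
    LinearMap.smul_apply]
  split_ifs <;> simp [Finsupp.smul_single]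

end DeformedProduct

theorem monomialMap_mul {bar : N →+ V} {b : Fin n → N} {w : Fin n → V}
    {Δ : Finset (Finset (Fin n))} (hw : w = fun i => bar (b i))
    (hind : ∀ S ∈ Δ, LinearIndependent ℚ fun i : S => w i.1)
    (hglue : ∀ S ∈ Δ, ∀ T ∈ Δ, coneOf w S ∩ coneOf w T = coneOf w (S ∩ T))
    (x y : MvPolynomial (Fin n) ℚ) :
    monomialMap b Δ (x * y) = dmul bar w Δ (monomialMap b Δ x) (monomialMap b Δ y) := by
  suffices (LinearMap.mul ℚ _).compr₂ (monomialMap b Δ) =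
      (deformedMul bar w Δ).compl₁₂ (monomialMap b Δ) (monomialMap b Δ) by
    rw [dmul_eq_deformedMul]
    exact LinearMap.congr_fun₂ this x y
  classical
  refine LinearMap.ext_basis (basisMonomials (Fin n) ℚ) (basisMonomials (Fin n) ℚ) fun m m' => ?_
  simp only [coe_basisMonomials, LinearMap.compr₂_apply, LinearMap.mul_apply', monomial_mul,
    LinearMap.compl₁₂_apply, monomialMap_monomial]
  by_cases hm : SupportedInCone Δ m
  · by_cases hm' : SupportedInCone Δ m'
    · rw [if_pos hm, if_pos hm', deformedMul_single_single, mul_one, ← latticePoint_add]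
      exact if_congr (supportedInCone_add_iff_exists_coneOf hw hind hglue hm hm') rfl rfl
    · rw [if_neg hm', if_neg fun h => hm' (h.mono le_add_self), map_zero]
  · rw [if_neg hm, if_neg fun h => hm (h.mono le_self_add), map_zero, LinearMap.zero_apply]

noncomputable def quotientEquivSRing {bar : N →+ V} {b : Fin n → N} {w : Fin n → V}
    {Δ : Finset (Finset (Fin n))} (hw : w = fun i => bar (b i))
    (hind : ∀ S ∈ Δ, LinearIndependent ℚ fun i : S => w i.1)
    (hdown : ∀ S ∈ Δ, ∀ T ⊆ S, T ∈ Δ)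
    (hglue : ∀ S ∈ Δ, ∀ T ∈ Δ, coneOf w S ∩ coneOf w T = coneOf w (S ∩ T)) :
    (MvPolynomial (Fin n) ℚ ⧸ srIdeal Δ) ≃ₗ[ℚ] SRing b Δ :=
  (Submodule.Quotient.restrictScalarsEquiv ℚ (srIdeal Δ)).symm ≪≫ₗ
    Submodule.quotEquivOfEq _ _ (ker_monomialMap hw hind hdown hglue).symm ≪≫ₗ
    (monomialMap b Δ).quotKerEquivRange ≪≫ₗ LinearEquiv.ofEq _ _ (range_monomialMap b Δ)

theorem quotientEquivSRing_mk {bar : N →+ V} {b : Fin n → N} {w : Fin n → V}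
    {Δ : Finset (Finset (Fin n))} (hw : w = fun i => bar (b i))
    (hind : ∀ S ∈ Δ, LinearIndependent ℚ fun i : S => w i.1)
    (hdown : ∀ S ∈ Δ, ∀ T ⊆ S, T ∈ Δ)
    (hglue : ∀ S ∈ Δ, ∀ T ∈ Δ, coneOf w S ∩ coneOf w T = coneOf w (S ∩ T))
    (x : MvPolynomial (Fin n) ℚ) :
    (quotientEquivSRing hw hind hdown hglue (Ideal.Quotient.mk _ x) : N →₀ ℚ) =
      monomialMap b Δ x :=
  rfl

end StanleyReisner

open StanleyReisner in
theorem stmt_10_general (N V : Type) [AddCommGroup N] [AddCommGroup V] [Module ℚ V]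
    (n : ℕ) (bar : N →+ V) (b : Fin n → N) (w : Fin n → V)
    (hw : w = fun i => bar (b i))
    (Δ : Finset (Finset (Fin n)))
    (hind : ∀ S ∈ Δ, LinearIndependent ℚ fun i : S => w i.1)
    (hdown : ∀ S ∈ Δ, ∀ T ⊆ S, T ∈ Δ)
    (hglue : ∀ S ∈ Δ, ∀ T ∈ Δ, coneOf w S ∩ coneOf w T = coneOf w (S ∩ T)) :
    ∃ e : (MvPolynomial (Fin n) ℚ ⧸ srIdeal Δ) ≃ₗ[ℚ] ↥(SRing b Δ),
      (∀ p q : MvPolynomial (Fin n) ℚ ⧸ srIdeal Δ,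
        (e (p * q) : N →₀ ℚ) = dmul bar w Δ (e p) (e q)) ∧
      (∀ k : Fin n → ℕ, (∃ S ∈ Δ, ∀ i, k i ≠ 0 → i ∈ S) →
        (e (Ideal.Quotient.mk (srIdeal Δ) (MvPolynomial.monomial (Finsupp.equivFunOnFinite.symm k) 1)) : N →₀ ℚ) =
          Finsupp.single (∑ i, k i • b i) 1) ∧
      (∀ k : Fin n → ℕ, ¬(∃ S ∈ Δ, ∀ i, k i ≠ 0 → i ∈ S) →
        (e (Ideal.Quotient.mk (srIdeal Δ) (MvPolynomial.monomial (Finsupp.equivFunOnFinite.symm k) 1)) : N →₀ ℚ) = 0) := by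
  refine ⟨quotientEquivSRing hw hind hdown hglue, fun p q => ?_, fun k hk => ?_, fun k hk => ?_⟩
  · obtain ⟨x, rfl⟩ := Ideal.Quotient.mk_surjective p
    obtain ⟨y, rfl⟩ := Ideal.Quotient.mk_surjective q
    simp only [← map_mul, quotientEquivSRing_mk, monomialMap_mul hw hind hglue]
  · rw [quotientEquivSRing_mk, monomialMap_monomial,
      if_pos ((supportedInCone_equivFunOnFinite_symm Δ k).mpr hk)]
    rfl
  · rw [quotientEquivSRing_mk, monomialMap_monomial,
      if_neg (mt (supportedInCone_equivFunOnFinite_symm Δ k).mp hk)]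

/-- **`S_Σ` is the Stanley-Reisner ring of `Σ`.**  For a complete simplicial fan with
rays `w i = bar (b i)`, the subring `S_Σ` of the deformed group ring generated by the
monomials `y^{b i}` is isomorphic, as a graded ring, to
`ℚ[x_1, …, x_n]/I_Σ`, via `x_i ↦ y^{b i}`; explicitly, the isomorphism sends the
class of the monomial `x^k` to `y^{∑ k i • b i}` when the support of `k` lies in a
cone of `Σ`, and to `0` otherwise (which makes it degree-preserving), and intertwines
polynomial multiplication with the deformed product. -/
theorem stmt_10 (N V : Type) [AddCommGroup N] [AddCommGroup V] [Module ℚ V]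
    (n : ℕ) (bar : N →+ V) (b : Fin n → N) (w : Fin n → V)
    (hw : w = fun i => bar (b i))
    (Δ : Finset (Finset (Fin n)))
    (hind : ∀ S ∈ Δ, LinearIndependent ℚ fun i : S => w i.1)
    (hdown : ∀ S ∈ Δ, ∀ T ⊆ S, T ∈ Δ)
    (hglue : ∀ S ∈ Δ, ∀ T ∈ Δ, coneOf w S ∩ coneOf w T = coneOf w (S ∩ T))
    (hcomplete : ∀ x : V, ∃ S ∈ Δ, x ∈ coneOf w S) :
    ∃ e : (MvPolynomial (Fin n) ℚ ⧸ srIdeal Δ) ≃ₗ[ℚ] ↥(SRing b Δ),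
      (∀ p q : MvPolynomial (Fin n) ℚ ⧸ srIdeal Δ,
        (e (p * q) : N →₀ ℚ) = dmul bar w Δ (e p) (e q)) ∧
      (∀ k : Fin n → ℕ, (∃ S ∈ Δ, ∀ i, k i ≠ 0 → i ∈ S) →
        (e (Ideal.Quotient.mk (srIdeal Δ) (MvPolynomial.monomial (Finsupp.equivFunOnFinite.symm k) 1)) : N →₀ ℚ) =
          Finsupp.single (∑ i, k i • b i) 1) ∧
      (∀ k : Fin n → ℕ, ¬(∃ S ∈ Δ, ∀ i, k i ≠ 0 → i ∈ S) →
        (e (Ideal.Quotient.mk (srIdeal Δ) (MvPolynomial.monomial (Finsupp.equivFunOnFinite.symm k) 1)) : N →₀ ℚ) = 0) :=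
  stmt_10_general N V n bar b w hw Δ hind hdown hglue
end

section
/- The rings A = ℚ[x,y]/⟨x² − y², xy⟩ and B = ℚ[x,y]/⟨x², (x+y)²⟩ are not isomorphic as graded ℚ-algebras: B contains a nonzero degree-one element z with z² = 0, while A contains no such element. -/
open MvPolynomial

/-- The orbifold Chow ring `A = ℚ[x,y]/⟨x² − y², xy⟩` of the toric Deligne-Mumford
stack of `ℙ(1,2,1)`. -/
noncomputable abbrev ringA : Type :=
  MvPolynomial (Fin 2) ℚ ⧸
    Ideal.span ({X 0 ^ 2 - X 1 ^ 2, X 0 * X 1} : Set (MvPolynomial (Fin 2) ℚ))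

/-- The Chow ring `B = ℚ[x,y]/⟨x², (x+y)²⟩` of the crepant resolution `𝔽₂`. -/
noncomputable abbrev ringB : Type :=
  MvPolynomial (Fin 2) ℚ ⧸
    Ideal.span ({X 0 ^ 2, (X 0 + X 1) ^ 2} : Set (MvPolynomial (Fin 2) ℚ))

/-- The degree-one part of `ringA`: the span of the images of `x` and `y`. -/
noncomputable def degOneA : Submodule ℚ ringA :=
  Submodule.span ℚ {Ideal.Quotient.mk _ (X 0), Ideal.Quotient.mk _ (X 1)}

/-- The degree-one part of `ringB`. -/
noncomputable def degOneB : Submodule ℚ ringB :=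
  Submodule.span ℚ {Ideal.Quotient.mk _ (X 0), Ideal.Quotient.mk _ (X 1)}

/-!
In `A` the relations `xy = 0` and `y² = x²` give `(ax + by)² = (a² + b²) x²`, and `x² ≠ 0`: over `ℂ`,
`x ↦ p + q`, `y ↦ i(p - q)` maps `A` to `ℂ[p,q]/(p², q²)` and sends `x²` to `2pq`. As `a² + b²`
vanishes only at `a = b = 0` over `ℚ`, `A` has no nonzero square-zero element of degree one. In `B`
the class of `x` is one: `x²` is a relation of `B`, and `x` is nonzero, as `x ↦ ε`, `y ↦ -ε`
into the dual numbers shows. A graded isomorphism would carry it back to such an element of `A`.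
-/

theorem Ideal.notMem_span_of_map {R S : Type*} [CommSemiring R] [Semiring S] (f : R →+* S)
    {s : Set R} (hs : ∀ a ∈ s, f a = 0) {r : R} (hr : f r ≠ 0) : r ∉ Ideal.span s :=
  fun h ↦ hr (Ideal.span_le.mpr (fun a ha ↦ RingHom.mem_ker.mpr (hs a ha)) h)

theorem AlgEquiv.exists_mul_self_eq_zero_of_map_eq {R A B : Type*} [CommSemiring R] [Semiring A]
    [Semiring B] [Algebra R A] [Algebra R B] (e : A ≃ₐ[R] B) {M : Submodule R A}
    {N : Submodule R B} (he : M.map e.toLinearMap = N) (hN : ∃ z ∈ N, z ≠ 0 ∧ z * z = 0) :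
    ∃ w ∈ M, w ≠ 0 ∧ w * w = 0 := by
  obtain ⟨z, hz, hz0, hzz⟩ := hN
  obtain ⟨w, hw, rfl⟩ := he ▸ hz
  refine ⟨w, hw, fun h ↦ hz0 (by simp [h]), e.injective ?_⟩
  simpa using hzz

section SquareZeroPair

variable {R : Type*} [CommRing R] {p q i : R}

theorem add_mul_self_of_mul_self_eq_zero (hp : p * p = 0) (hq : q * q = 0) :
    (p + q) * (p + q) = 2 * (p * q) := by
  linear_combination hp + hq

theorem mul_sub_mul_self_of_mul_self_eq_zero (hp : p * p = 0) (hq : q * q = 0) (hi : i * i = -1) :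
    (i * (p - q)) * (i * (p - q)) = 2 * (p * q) := by
  linear_combination (p - q) ^ 2 * hi - hp - hq

theorem add_mul_mul_sub_of_mul_self_eq_zero (hp : p * p = 0) (hq : q * q = 0) :
    (p + q) * (i * (p - q)) = 0 := by
  linear_combination i * hp - i * hq

end SquareZeroPair

open TrivSqZeroExt DualNumber

theorem DualNumber.inl_eps_mul_eps {R : Type*} [CommSemiring R] :
    (inl ε : R[ε][ε]) * ε = inr ε := by
  rw [show (ε : R[ε][ε]) = inr 1 from rfl, inl_mul_inr, smul_eq_mul, mul_one]

theorem X_zero_sq_notMem_ringA_ideal :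
    (X 0 ^ 2 : MvPolynomial (Fin 2) ℚ) ∉
      Ideal.span ({X 0 ^ 2 - X 1 ^ 2, X 0 * X 1} : Set (MvPolynomial (Fin 2) ℚ)) := by
  set p : ℂ[ε][ε] := inl ε
  set q : ℂ[ε][ε] := ε
  set i : ℂ[ε][ε] := algebraMap ℂ _ Complex.I
  have hp : p * p = 0 := by simp [p, ← inl_mul]
  have hq : q * q = 0 := eps_mul_eps
  have hi : i * i = -1 := by simp [i, ← map_mul]
  have hx := add_mul_self_of_mul_self_eq_zero (R := ℂ[ε][ε]) hp hq
  have hy := mul_sub_mul_self_of_mul_self_eq_zero (R := ℂ[ε][ε]) hp hq hi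
  have hxy := add_mul_mul_sub_of_mul_self_eq_zero (R := ℂ[ε][ε]) (i := i) hp hq
  refine Ideal.notMem_span_of_map (aeval ![p + q, i * (p - q)]).toRingHom ?_ ?_
  · rintro _ (rfl | rfl)
    · simp [sq, hx, hy]
    · simp [hxy]
  · rw [AlgHom.toRingHom_eq_coe, RingHom.coe_coe, map_pow, aeval_X, Matrix.cons_val_zero, sq, hx,
      inl_eps_mul_eps]
    intro h
    simpa [two_mul] using congrArg (fun z ↦ z.snd.snd) h

theorem X_zero_notMem_ringB_ideal :
    (X 0 : MvPolynomial (Fin 2) ℚ) ∉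
      Ideal.span ({X 0 ^ 2, (X 0 + X 1) ^ 2} : Set (MvPolynomial (Fin 2) ℚ)) := by
  refine Ideal.notMem_span_of_map (aeval ![(ε : ℚ[ε]), -ε]).toRingHom ?_ ?_
  · rintro _ (rfl | rfl) <;> simp [sq]
  · intro h
    simpa using congrArg snd h

local notation "x" => Ideal.Quotient.mk _ (X 0)
local notation "y" => Ideal.Quotient.mk _ (X 1)

theorem ringA_x_mul_y : (x * y : ringA) = 0 := by
  rw [← map_mul, Ideal.Quotient.eq_zero_iff_mem]
  exact Ideal.subset_span (by simp)

theorem ringA_y_mul_y : (y * y : ringA) = x * x := by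
  rw [← map_mul, ← map_mul, Ideal.Quotient.mk_eq_mk_iff_sub_mem, ← neg_mem_iff, neg_sub]
  exact Ideal.subset_span (by simp [sq])

theorem ringA_x_mul_x_ne_zero : (x * x : ringA) ≠ 0 := by
  rw [← map_mul, Ne, Ideal.Quotient.eq_zero_iff_mem, ← sq]
  exact X_zero_sq_notMem_ringA_ideal

theorem ringA_smul_add_smul_mul_self (a b : ℚ) :
    ((a • x + b • y) * (a • x + b • y) : ringA) = (a * a + b * b) • (x * x) := by
  have hyx : (y * x : ringA) = 0 := by rw [mul_comm, ringA_x_mul_y]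
  simp only [add_mul, mul_add, smul_mul_smul_comm, ringA_x_mul_y, hyx, ringA_y_mul_y]
  module

theorem eq_zero_of_mem_degOneA_of_mul_self_eq_zero {z : ringA} (hz : z ∈ degOneA)
    (hzz : z * z = 0) : z = 0 := by
  obtain ⟨a, b, rfl⟩ := Submodule.mem_span_pair.mp hz
  rw [ringA_smul_add_smul_mul_self, smul_eq_zero] at hzz
  obtain ⟨rfl, rfl⟩ := mul_self_add_mul_self_eq_zero.mp (hzz.resolve_right ringA_x_mul_x_ne_zero)
  simp

theorem exists_mem_degOneB_ne_zero_mul_self_eq_zero :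
    ∃ z ∈ degOneB, z ≠ 0 ∧ z * z = 0 := by
  refine ⟨x, Submodule.subset_span (by simp), ?_, ?_⟩
  · rw [Ne, Ideal.Quotient.eq_zero_iff_mem]
    exact X_zero_notMem_ringB_ideal
  · rw [← map_mul, Ideal.Quotient.eq_zero_iff_mem, ← sq]
    exact Ideal.subset_span (by simp)

/-- **The orbifold Chow ring of `ℙ(1,2,1)` is not isomorphic to the Chow ring of its
crepant resolution.**  The rings `A = ℚ[x,y]/⟨x² − y², xy⟩` and
`B = ℚ[x,y]/⟨x², (x+y)²⟩` are not isomorphic as graded `ℚ`-algebras: `B` contains a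
nonzero degree-one element with square zero, while `A` contains no such element. -/
theorem stmt_13 :
    (¬ ∃ e : ringA ≃ₐ[ℚ] ringB,
        Submodule.map e.toLinearMap degOneA = degOneB) ∧
    (∃ z ∈ degOneB, z ≠ 0 ∧ z * z = 0) ∧
    (∀ z ∈ degOneA, z * z = 0 → z = 0) := by
  refine ⟨?_, exists_mem_degOneB_ne_zero_mul_self_eq_zero,
    fun z ↦ eq_zero_of_mem_degOneA_of_mul_self_eq_zero⟩
  rintro ⟨e, he⟩
  obtain ⟨w, hw, hw0, hww⟩ :=
    e.exists_mul_self_eq_zero_of_map_eq he exists_mem_degOneB_ne_zero_mul_self_eq_zero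
  exact hw0 (eq_zero_of_mem_degOneA_of_mul_self_eq_zero hw hww)
end

section
/- Let N(τ) = N/N_τ for a cone τ in a stacky fan, with link(τ) having rays ρ_1,…,ρ_ℓ, and suppose for each ray ρ_i ⊆ τ an element θ_i ∈ N^⋆ is chosen with θ_i(b_i) = 1 and θ_i(b_j) = 0 for all other rays ρ_j ⊆ τ. Then the assignment y^{b_i} ↦ y^{b̃_i} for ρ_i ⊆ link(τ), y^{b_i} ↦ −Σ_{j=1}^ℓ θ_i(b_j) y^{b̃_j} for ρ_i ⊆ τ, and y^{b_i} ↦ 0 otherwise, defines a surjective ring homomorphism S_Σ → S_{Σ/τ}. -/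
/-- The rays of the link of the cone `τ`: those rays `ρ_i` with `ρ_i ∩ τ = 0` and
`ρ_i + τ ∈ Σ`. -/
def linkRays {n : ℕ} (Δ : Finset (Finset (Fin n))) (τ : Finset (Fin n)) :
    Finset (Fin n) :=
  Finset.univ.filter fun i => i ∉ τ ∧ insert i τ ∈ Δ

/-- The Stanley-Reisner ideal of the quotient fan `Σ/τ` (whose cones are indexed by
the faces of the link of `τ`), in the polynomial ring on the rays of the link. -/
noncomputable def srIdealLink {n : ℕ} (Δ : Finset (Finset (Fin n)))
    (τ : Finset (Fin n)) : Ideal (MvPolynomial {i // i ∈ linkRays Δ τ} ℚ) :=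
  Ideal.span {p | ∃ S : Finset {i // i ∈ linkRays Δ τ},
    (S.image (fun j => j.1) ∪ τ) ∉ Δ ∧ p = ∏ j ∈ S, MvPolynomial.X j}

/-!
Send `X i` to `X i` on the link of `τ`, to an arbitrary polynomial `c i` on `τ`, and to `0`
elsewhere. A non-face `S` either contains a ray outside `τ ∪ link(τ)`, and its monomial goes
to `0`, or `S ⊆ τ ∪ link(τ)`; then `(S ∩ link(τ)) ∪ τ ⊇ S` is a non-face because `Δ` is closed
under taking subsets, so the image is a multiple of a Stanley-Reisner generator of `Σ/τ`.
Surjectivity holds because the inclusion of the link variables is a section.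
-/

open MvPolynomial

namespace StanleyReisnerLink

variable {n : ℕ} (Δ : Finset (Finset (Fin n))) (τ : Finset (Fin n))

theorem notMem_linkRays_of_mem {i : Fin n} (hi : i ∈ τ) : i ∉ linkRays Δ τ := by
  simp [linkRays, hi]

open Classical in
noncomputable def linkAssignment (c : Fin n → MvPolynomial {i // i ∈ linkRays Δ τ} ℚ) :
    Fin n → MvPolynomial {i // i ∈ linkRays Δ τ} ℚ := fun i =>
  if h : i ∈ linkRays Δ τ then X ⟨i, h⟩ else if i ∈ τ then c i else 0

variable {Δ τ} (c : Fin n → MvPolynomial {i // i ∈ linkRays Δ τ} ℚ)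

theorem linkAssignment_of_mem_linkRays {i : Fin n} (h : i ∈ linkRays Δ τ) :
    linkAssignment Δ τ c i = X ⟨i, h⟩ := by
  simp [linkAssignment, h]

theorem linkAssignment_of_mem {i : Fin n} (h : i ∈ τ) : linkAssignment Δ τ c i = c i := by
  simp [linkAssignment, h, notMem_linkRays_of_mem Δ τ h]

theorem linkAssignment_of_notMem {i : Fin n} (hτ : i ∉ τ) (hL : i ∉ linkRays Δ τ) :
    linkAssignment Δ τ c i = 0 := by
  simp [linkAssignment, hτ, hL]

theorem aeval_linkAssignment_rename (p : MvPolynomial {i // i ∈ linkRays Δ τ} ℚ) :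
    aeval (linkAssignment Δ τ c) (rename Subtype.val p) = p := by
  have hsection : aeval (linkAssignment Δ τ c ∘ Subtype.val) = AlgHom.id ℚ _ :=
    algHom_ext fun j => by simp [linkAssignment_of_mem_linkRays c j.2]
  rw [aeval_rename, hsection, AlgHom.id_apply]

theorem aeval_linkAssignment_prod_mem_srIdealLink
    (hdown : ∀ S ∈ Δ, ∀ T ⊆ S, T ∈ Δ) {S : Finset (Fin n)} (hS : S ∉ Δ) :
    aeval (linkAssignment Δ τ c) (∏ i ∈ S, (X i : MvPolynomial (Fin n) ℚ)) ∈
      srIdealLink Δ τ := by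
  rw [map_prod]
  simp only [aeval_X]
  by_cases hcover : ∀ i ∈ S, i ∈ τ ∨ i ∈ linkRays Δ τ
  · set T := S.subtype (· ∈ linkRays Δ τ)
    have hgen : (∏ j ∈ T, X j) ∈ srIdealLink Δ τ := by
      refine Ideal.subset_span ⟨T, fun hmem => hS (hdown _ hmem S fun i hi => ?_), rfl⟩
      rcases hcover i hi with h | h
      · exact Finset.mem_union_right _ h
      · exact Finset.mem_union_left _ (Finset.mem_image.mpr ⟨⟨i, h⟩, by simp [T, hi], rfl⟩)
    have hlink : ∏ i ∈ S with i ∈ linkRays Δ τ, linkAssignment Δ τ c i = ∏ j ∈ T, X j := by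
      rw [← Finset.prod_subtype_eq_prod_filter]
      exact Finset.prod_congr rfl fun j _ => linkAssignment_of_mem_linkRays c j.2
    rw [← Finset.prod_filter_mul_prod_filter_not S (· ∈ linkRays Δ τ), hlink]
    exact Ideal.mul_mem_right _ _ hgen
  · push Not at hcover
    obtain ⟨i, hiS, hiτ, hiL⟩ := hcover
    rw [Finset.prod_eq_zero hiS (linkAssignment_of_notMem c hiτ hiL)]
    exact Ideal.zero_mem _

theorem srIdeal_le_ker (hdown : ∀ S ∈ Δ, ∀ T ⊆ S, T ∈ Δ) :
    srIdeal Δ ≤ RingHom.ker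
      ((Ideal.Quotient.mkₐ ℚ (srIdealLink Δ τ)).comp (aeval (linkAssignment Δ τ c))) := by
  refine Ideal.span_le.mpr ?_
  rintro _ ⟨S, hS, rfl⟩
  exact Ideal.Quotient.eq_zero_iff_mem.mpr
    (aeval_linkAssignment_prod_mem_srIdealLink c hdown hS)

noncomputable def linkMap (hdown : ∀ S ∈ Δ, ∀ T ⊆ S, T ∈ Δ) :
    (MvPolynomial (Fin n) ℚ ⧸ srIdeal Δ) →ₐ[ℚ]
      (MvPolynomial {i // i ∈ linkRays Δ τ} ℚ ⧸ srIdealLink Δ τ) :=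
  Ideal.Quotient.liftₐ (srIdeal Δ)
    ((Ideal.Quotient.mkₐ ℚ (srIdealLink Δ τ)).comp (aeval (linkAssignment Δ τ c)))
    fun _ hp => srIdeal_le_ker c hdown hp

variable (hdown : ∀ S ∈ Δ, ∀ T ⊆ S, T ∈ Δ)

theorem linkMap_mk (p : MvPolynomial (Fin n) ℚ) :
    linkMap c hdown (Ideal.Quotient.mk _ p) =
      Ideal.Quotient.mk _ (aeval (linkAssignment Δ τ c) p) :=
  rfl

theorem linkMap_surjective : Function.Surjective (linkMap c hdown) := by
  intro y
  obtain ⟨p, rfl⟩ := Ideal.Quotient.mk_surjective y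
  exact ⟨Ideal.Quotient.mk _ (rename Subtype.val p), by
    rw [linkMap_mk, aeval_linkAssignment_rename]⟩

end StanleyReisnerLink

open StanleyReisnerLink

theorem stmt_16_general (N : Type) [AddCommGroup N]
    (n : ℕ) (b : Fin n → N)
    (Δ : Finset (Finset (Fin n)))
    (hdown : ∀ S ∈ Δ, ∀ T ⊆ S, T ∈ Δ)
    (τ : Finset (Fin n))
    (θ : Fin n → (N →+ ℤ)) :
    ∃ f : (MvPolynomial (Fin n) ℚ ⧸ srIdeal Δ) →ₐ[ℚ]
        (MvPolynomial {i // i ∈ linkRays Δ τ} ℚ ⧸ srIdealLink Δ τ),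
      Function.Surjective ⇑f ∧
      (∀ i (h : i ∈ linkRays Δ τ),
        f (Ideal.Quotient.mk _ (MvPolynomial.X i)) =
          Ideal.Quotient.mk _ (MvPolynomial.X ⟨i, h⟩)) ∧
      (∀ i ∈ τ,
        f (Ideal.Quotient.mk _ (MvPolynomial.X i)) =
          - ∑ j ∈ (linkRays Δ τ).attach,
              ((θ i (b j.1) : ℚ)) •
                Ideal.Quotient.mk (srIdealLink Δ τ) (MvPolynomial.X j)) ∧
      (∀ i, i ∉ τ → i ∉ linkRays Δ τ →
        f (Ideal.Quotient.mk _ (MvPolynomial.X i)) = 0) := by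
  set c : Fin n → MvPolynomial {i // i ∈ linkRays Δ τ} ℚ :=
    fun i => -∑ j ∈ (linkRays Δ τ).attach, ((θ i (b j.1) : ℚ)) • X j
  refine ⟨linkMap c hdown, linkMap_surjective c hdown, fun i h => ?_, fun i hi => ?_,
    fun i hτ hL => ?_⟩ <;> rw [linkMap_mk, aeval_X]
  · rw [linkAssignment_of_mem_linkRays c h]
  · rw [linkAssignment_of_mem c hi, map_neg, map_sum]
    exact congrArg Neg.neg
      (Finset.sum_congr rfl fun j _ => map_smul (Ideal.Quotient.mkₐ ℚ _) _ _)
  · rw [linkAssignment_of_notMem c hτ hL, map_zero]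

/-- **The surjection `S_Σ → S_{Σ/τ}`.**  Let `Σ` be a complete simplicial stacky fan
with rays `b_i ∈ N`, `w i = bar (b i)`, and let `τ ∈ Δ` be a cone.  Suppose that for
each ray `i ∈ τ` an element `θ_i ∈ N⋆` is chosen with `θ_i(b_i) = 1` and
`θ_i(b_j) = 0` for the other rays `j ∈ τ`.  Then (in Stanley-Reisner presentations of
`S_Σ` and `S_{Σ/τ}`) the assignment `y^{b_i} ↦ y^{b̃_i}` for `i` in the link of `τ`,
`y^{b_i} ↦ −∑_{j ∈ link} θ_i(b_j) y^{b̃_j}` for `i ∈ τ`, and `y^{b_i} ↦ 0` otherwise,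
defines a surjective homomorphism of `ℚ`-algebras `S_Σ → S_{Σ/τ}`. -/
theorem stmt_16 (N V : Type) [AddCommGroup N] [AddCommGroup V] [Module ℚ V]
    (n : ℕ) (bar : N →+ V) (b : Fin n → N) (w : Fin n → V)
    (hw : w = fun i => bar (b i))
    (Δ : Finset (Finset (Fin n)))
    (hind : ∀ S ∈ Δ, LinearIndependent ℚ fun i : S => w i.1)
    (hdown : ∀ S ∈ Δ, ∀ T ⊆ S, T ∈ Δ)
    (hglue : ∀ S ∈ Δ, ∀ T ∈ Δ, coneOf w S ∩ coneOf w T = coneOf w (S ∩ T))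
    (hcomplete : ∀ x : V, ∃ S ∈ Δ, x ∈ coneOf w S)
    (τ : Finset (Fin n)) (hτ : τ ∈ Δ)
    (θ : Fin n → (N →+ ℤ))
    (hθ : ∀ i ∈ τ, θ i (b i) = 1 ∧ ∀ j ∈ τ, j ≠ i → θ i (b j) = 0) :
    ∃ f : (MvPolynomial (Fin n) ℚ ⧸ srIdeal Δ) →ₐ[ℚ]
        (MvPolynomial {i // i ∈ linkRays Δ τ} ℚ ⧸ srIdealLink Δ τ),
      Function.Surjective ⇑f ∧
      (∀ i (h : i ∈ linkRays Δ τ),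
        f (Ideal.Quotient.mk _ (MvPolynomial.X i)) =
          Ideal.Quotient.mk _ (MvPolynomial.X ⟨i, h⟩)) ∧
      (∀ i ∈ τ,
        f (Ideal.Quotient.mk _ (MvPolynomial.X i)) =
          - ∑ j ∈ (linkRays Δ τ).attach,
              ((θ i (b j.1) : ℚ)) •
                Ideal.Quotient.mk (srIdealLink Δ τ) (MvPolynomial.X j)) ∧
      (∀ i, i ∉ τ → i ∉ linkRays Δ τ →
        f (Ideal.Quotient.mk _ (MvPolynomial.X i)) = 0) :=
  stmt_16_general N n b Δ hdown τ θ
end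

section
/- Let v₁, v₂ ∈ Box(Σ) for a complete simplicial stacky fan Σ with v̄₁, v̄₂ in a common cone. Then there exists a unique v₃ ∈ Box(Σ) with v̄₃ ∈ σ(v̄₁, v̄₂) and nonnegative integers m_i ∈ {0, 1, 2} indexed by rays ρ_i ⊆ σ(v̄₁, v̄₂, v̄₃) such that v₁ + v₂ + v₃ = Σ_i m_i b_i in N; moreover if v̄_j = Σ_i a_{j,i} b̄_i with 0 ≤ a_{j,i} < 1, then m_i = a_{1,i} + a_{2,i} + a_{3,i}. -/
/-- `Box(Σ)`: the set of `v ∈ N` such that `bar v = ∑_{i ∈ S} q i • w i` with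
`0 ≤ q i < 1` for some `d`-dimensional cone `S ∈ Δ`. -/
def BoxSet {N V : Type} [AddCommGroup N] [AddCommGroup V] [Module ℚ V] {n : ℕ}
    (bar : N →+ V) (w : Fin n → V) (Δ : Finset (Finset (Fin n))) (d : ℕ) : Set N :=
  {v | ∃ S ∈ Δ, S.card = d ∧ ∃ q : Fin n → ℚ,
    (∀ i, 0 ≤ q i ∧ q i < 1) ∧ (∀ i, i ∉ S → q i = 0) ∧ bar v = ∑ i, q i • w i}


lemma coeff_unique {V : Type} [AddCommGroup V] [Module ℚ V] {n : ℕ}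
    (w : Fin n → V) (S : Finset (Fin n))
    (hli : LinearIndependent ℚ fun i : S => w i.1)
    (q q' : Fin n → ℚ) (hq : ∀ i ∉ S, q i = 0) (hq' : ∀ i ∉ S, q' i = 0)
    (h : ∑ i, q i • w i = ∑ i, q' i • w i) : q = q' := by
  have h0 : ∑ i, (q i - q' i) • w i = 0 := by
    simp only [sub_smul, Finset.sum_sub_distrib, h, sub_self]
  have hset : ∑ i ∈ S, (q i - q' i) • w i = 0 := by
    rw [Finset.sum_subset S.subset_univ]
    · exact h0
    · intro x _ hx; simp [hq x hx, hq' x hx]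
  have hatt : ∑ i : S, (q i.1 - q' i.1) • w i.1 = 0 := by
    rw [← hset]; exact Finset.sum_attach S (fun i => (q i - q' i) • w i)
  have := Fintype.linearIndependent_iff.mp hli (fun i => q i.1 - q' i.1) hatt
  funext i
  by_cases hi : i ∈ S
  · have := this ⟨i, hi⟩; simpa using sub_eq_zero.mp this
  · rw [hq i hi, hq' i hi]

lemma box_coords {N V : Type} [AddCommGroup N] [AddCommGroup V] [Module ℚ V] {n d : ℕ}
    (bar : N →+ V) (w : Fin n → V) (Δ : Finset (Finset (Fin n)))
    (hind : ∀ S ∈ Δ, LinearIndependent ℚ fun i : S => w i.1)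
    (hglue : ∀ S ∈ Δ, ∀ T ∈ Δ, coneOf w S ∩ coneOf w T = coneOf w (S ∩ T))
    (v : N) (hv : v ∈ BoxSet bar w Δ d)
    (S₁₂ : Finset (Fin n)) (hS₁₂ : S₁₂ ∈ Δ) (h : bar v ∈ coneOf w S₁₂) :
    ∃ q : Fin n → ℚ, (∀ i, 0 ≤ q i ∧ q i < 1) ∧ (∀ i, i ∉ S₁₂ → q i = 0) ∧
      bar v = ∑ i, q i • w i := by
  obtain ⟨S', hS', -, p, hp, hpsupp, hpeq⟩ := hv
  have hvS' : bar v ∈ coneOf w S' := ⟨p, fun i => (hp i).1, hpsupp, hpeq⟩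
  have hmem : bar v ∈ coneOf w (S' ∩ S₁₂) := by
    rw [← hglue S' hS' S₁₂ hS₁₂]; exact ⟨hvS', h⟩
  obtain ⟨r, hr0, hrsupp, hreq⟩ := hmem
  have hrS' : ∀ i ∉ S', r i = 0 := fun i hi =>
    hrsupp i (fun hmem => hi (Finset.mem_inter.mp hmem).1)
  have hrp : r = p := coeff_unique w S' (hind S' hS') r p hrS' hpsupp (hreq.symm.trans hpeq)
  refine ⟨r, fun i => ⟨hr0 i, ?_⟩, fun i hi =>
    hrsupp i (fun hmem => hi (Finset.mem_inter.mp hmem).2), hreq⟩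
  rw [hrp]; exact (hp i).2

/-- **The box element `v₃` associated to `v₁, v₂ ∈ Box(Σ)`.**  Let `Σ` be a complete
simplicial stacky fan (rays `b i ∈ N`, `w i = bar (b i)`, `N_ℚ` of dimension `d`),
let `v₁, v₂ ∈ Box(Σ)` and let `S₁₂ ∈ Δ` be the minimal cone containing `bar v₁` and
`bar v₂`.  Then there is a unique `v₃ ∈ Box(Σ)` with `bar v₃ ∈ σ(v̄₁, v̄₂)` and
`v₁ + v₂ + v₃ = ∑ m_i • b_i` for integers `m_i ∈ {0, 1, 2}` supported on `S₁₂`;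
moreover, for any expressions `bar v_j = ∑ a_{j,i} • w i` with `0 ≤ a_{j,i} < 1`
supported on `S₁₂`, one has `m_i = a_{1,i} + a_{2,i} + a_{3,i}`. -/
theorem stmt_18 (N V : Type) [AddCommGroup N] [AddCommGroup V] [Module ℚ V]
    (n d : ℕ) (bar : N →+ V) (b : Fin n → N) (w : Fin n → V)
    (hw : w = fun i => bar (b i))
    (Δ : Finset (Finset (Fin n)))
    (hind : ∀ S ∈ Δ, LinearIndependent ℚ fun i : S => w i.1)
    (hdown : ∀ S ∈ Δ, ∀ T ⊆ S, T ∈ Δ)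
    (hglue : ∀ S ∈ Δ, ∀ T ∈ Δ, coneOf w S ∩ coneOf w T = coneOf w (S ∩ T))
    (hcomplete : ∀ x : V, ∃ S ∈ Δ, x ∈ coneOf w S)
    (hdim : Module.finrank ℚ V = d)
    (hmax : ∀ S ∈ Δ, ∃ T ∈ Δ, S ⊆ T ∧ T.card = d)
    (v₁ v₂ : N) (hv₁ : v₁ ∈ BoxSet bar w Δ d) (hv₂ : v₂ ∈ BoxSet bar w Δ d)
    (S₁₂ : Finset (Fin n)) (hS₁₂ : S₁₂ ∈ Δ)
    (h₁ : bar v₁ ∈ coneOf w S₁₂) (h₂ : bar v₂ ∈ coneOf w S₁₂)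
    (hmin : ∀ S ∈ Δ, bar v₁ ∈ coneOf w S → bar v₂ ∈ coneOf w S → S₁₂ ⊆ S) :
    (∃! v₃ : N, v₃ ∈ BoxSet bar w Δ d ∧ bar v₃ ∈ coneOf w S₁₂ ∧
      ∃ m : Fin n → ℕ, (∀ i, m i ≤ 2) ∧ (∀ i, i ∉ S₁₂ → m i = 0) ∧
        v₁ + v₂ + v₃ = ∑ i, m i • b i) ∧
    (∀ (v₃ : N) (m : Fin n → ℕ),
      v₃ ∈ BoxSet bar w Δ d → bar v₃ ∈ coneOf w S₁₂ →
      (∀ i, m i ≤ 2) → (∀ i, i ∉ S₁₂ → m i = 0) →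
      v₁ + v₂ + v₃ = ∑ i, m i • b i →
      ∀ a₁ a₂ a₃ : Fin n → ℚ,
        (∀ i, 0 ≤ a₁ i ∧ a₁ i < 1) → (∀ i, i ∉ S₁₂ → a₁ i = 0) →
          bar v₁ = ∑ i, a₁ i • w i →
        (∀ i, 0 ≤ a₂ i ∧ a₂ i < 1) → (∀ i, i ∉ S₁₂ → a₂ i = 0) →
          bar v₂ = ∑ i, a₂ i • w i →
        (∀ i, 0 ≤ a₃ i ∧ a₃ i < 1) → (∀ i, i ∉ S₁₂ → a₃ i = 0) →
          bar v₃ = ∑ i, a₃ i • w i →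
        ∀ i, (m i : ℚ) = a₁ i + a₂ i + a₃ i) := by
  have hwb : ∀ i, bar (b i) = w i := fun i => by rw [hw]
  -- key computation: bar of ∑ m i • b i
  have hbarsum : ∀ m : Fin n → ℕ, bar (∑ i, m i • b i) = ∑ i, (m i : ℚ) • w i := by
    intro m
    rw [map_sum]
    refine Finset.sum_congr rfl fun i _ => ?_
    rw [map_nsmul, hwb, Nat.cast_smul_eq_nsmul]
  obtain ⟨a₁, ha₁bd, ha₁s, ha₁eq⟩ :=
    box_coords bar w Δ hind hglue v₁ hv₁ S₁₂ hS₁₂ h₁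
  obtain ⟨a₂, ha₂bd, ha₂s, ha₂eq⟩ :=
    box_coords bar w Δ hind hglue v₂ hv₂ S₁₂ hS₁₂ h₂
  set m : Fin n → ℕ := fun i => (⌈a₁ i + a₂ i⌉).toNat with hm
  have hx0 : ∀ i, (0:ℚ) ≤ a₁ i + a₂ i := fun i => add_nonneg (ha₁bd i).1 (ha₂bd i).1
  have hmcast : ∀ i, (m i : ℚ) = (⌈a₁ i + a₂ i⌉ : ℚ) := by
    intro i
    rw [hm]
    norm_cast
    exact Int.toNat_of_nonneg (Int.ceil_nonneg (hx0 i))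
  set a₃ : Fin n → ℚ := fun i => (m i : ℚ) - a₁ i - a₂ i with ha₃
  have ha₃bd : ∀ i, 0 ≤ a₃ i ∧ a₃ i < 1 := by
    intro i
    constructor
    · have := Int.le_ceil (a₁ i + a₂ i)
      simp only [ha₃]; rw [hmcast i]; push_cast at this ⊢; linarith
    · have := Int.ceil_lt_add_one (a₁ i + a₂ i)
      simp only [ha₃]; rw [hmcast i]; push_cast at this ⊢; linarith
  have hm2 : ∀ i, m i ≤ 2 := by
    intro i
    have hle : a₁ i + a₂ i ≤ (2:ℚ) := by
      have := (ha₁bd i).2; have := (ha₂bd i).2; linarith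
    have : ⌈a₁ i + a₂ i⌉ ≤ 2 := Int.ceil_le.mpr (by exact_mod_cast hle)
    have hmi : m i = (⌈a₁ i + a₂ i⌉).toNat := rfl
    rw [hmi]; omega
  have hms : ∀ i, i ∉ S₁₂ → m i = 0 := by
    intro i hi
    rw [hm]
    simp [ha₁s i hi, ha₂s i hi]
  have ha₃s : ∀ i, i ∉ S₁₂ → a₃ i = 0 := by
    intro i hi
    simp only [ha₃]
    rw [hms i hi, ha₁s i hi, ha₂s i hi]
    norm_num
  set v₃ : N := (∑ i, m i • b i) - v₁ - v₂ with hv₃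
  have hbar3 : bar v₃ = ∑ i, a₃ i • w i := by
    rw [hv₃, map_sub, map_sub, hbarsum, ha₁eq, ha₂eq]
    rw [← Finset.sum_sub_distrib, ← Finset.sum_sub_distrib]
    refine Finset.sum_congr rfl fun i _ => ?_
    simp only [ha₃]
    rw [← sub_smul, ← sub_smul]
  have hkey : ∀ (y : N) (m' : Fin n → ℕ), y ∈ BoxSet bar w Δ d →
      bar y ∈ coneOf w S₁₂ → (∀ i, i ∉ S₁₂ → m' i = 0) →
      v₁ + v₂ + y = ∑ i, m' i • b i → m' = m ∧ y = v₃ := by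
    intro y m' hybox hycone hm's hyeq
    obtain ⟨a₃', ha₃'bd, ha₃'s, ha₃'eq⟩ :=
      box_coords bar w Δ hind hglue y hybox S₁₂ hS₁₂ hycone
    have hbary : bar y = ∑ i, ((m' i : ℚ) - a₁ i - a₂ i) • w i := by
      have h := congrArg bar hyeq
      rw [map_add, map_add, hbarsum, ha₁eq, ha₂eq] at h
      have : bar y = (∑ i, (m' i : ℚ) • w i) - (∑ i, a₁ i • w i)
          - (∑ i, a₂ i • w i) := by
        rw [← h]; abel
      rw [this, ← Finset.sum_sub_distrib, ← Finset.sum_sub_distrib]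
      refine Finset.sum_congr rfl fun i _ => ?_
      rw [← sub_smul, ← sub_smul]
    have hcu : a₃' = fun i => (m' i : ℚ) - a₁ i - a₂ i := by
      refine coeff_unique w S₁₂ (hind S₁₂ hS₁₂) _ _ ha₃'s ?_ ?_
      · intro i hi; rw [hm's i hi, ha₁s i hi, ha₂s i hi]; norm_num
      · rw [← ha₃'eq, ← hbary]
    have hmm : ∀ i, m' i = m i := by
      intro i
      have h1 : 0 ≤ (m' i : ℚ) - a₁ i - a₂ i := by
        rw [← congrFun hcu i]; exact (ha₃'bd i).1
      have h2 : (m' i : ℚ) - a₁ i - a₂ i < 1 := by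
        rw [← congrFun hcu i]; exact (ha₃'bd i).2
      have hceil : ⌈a₁ i + a₂ i⌉ = (m' i : ℤ) := by
        rw [Int.ceil_eq_iff]
        constructor <;> push_cast <;> linarith
      have hmi : m i = (⌈a₁ i + a₂ i⌉).toNat := rfl
      rw [hmi, hceil]
      omega
    have hmeq : m' = m := funext hmm
    refine ⟨hmeq, ?_⟩
    have : v₁ + v₂ + y = v₁ + v₂ + v₃ := by
      rw [hyeq, hmeq, hv₃]; abel
    exact add_left_cancel this
  constructor
  · refine ⟨v₃, ⟨?_, ?_, m, hm2, hms, by rw [hv₃]; abel⟩, ?_⟩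
    · obtain ⟨T, hT, hTsub, hTcard⟩ := hmax S₁₂ hS₁₂
      exact ⟨T, hT, hTcard, a₃, ha₃bd, fun i hi => ha₃s i (fun h => hi (hTsub h)),
        hbar3⟩
    · exact ⟨a₃, fun i => (ha₃bd i).1, ha₃s, hbar3⟩
    · rintro y ⟨hybox, hycone, m', _, hm's, hyeq⟩
      exact (hkey y m' hybox hycone hm's hyeq).2
  · intro u mu hubox hucone hmu2 hmus hueq c₁ c₂ c₃ hc₁bd hc₁s hc₁eq
      hc₂bd hc₂s hc₂eq hc₃bd hc₃s hc₃eq i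
    have hsum : ∑ j, (c₁ j + c₂ j + c₃ j) • w j = ∑ j, (mu j : ℚ) • w j := by
      have h := congrArg bar hueq
      rw [map_add, map_add, hbarsum, hc₁eq, hc₂eq, hc₃eq] at h
      rw [← h, ← Finset.sum_add_distrib, ← Finset.sum_add_distrib]
      refine Finset.sum_congr rfl fun j _ => ?_
      rw [← add_smul, ← add_smul]
    have := coeff_unique w S₁₂ (hind S₁₂ hS₁₂) _ _
      (fun j hj => by rw [hc₁s j hj, hc₂s j hj, hc₃s j hj]; norm_num)
      (fun j hj => by rw [hmus j hj]; norm_num) hsum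
    exact (congrFun this i).symm
end
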